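/- arXiv:2511.04313 — 8 statements merged into one kernel-verified Lean document; each statement's English description precedes it below -/
import Mathlib

section
/- For a 2×2 complex matrix T = [[a, d], [c, b]], the operator norm of T equals (√(r+s) + √(r−s))/2, where r = |a|² + |b|² + |c|² + |d|² and s = 2|ab − cd|. -/
/-!
`‖T‖²` is the largest eigenvalue of `Tᴴ T = [[p, w], [conj w, q]]`, where `p = |a|² + |c|²`,
`q = |d|² + |b|²` and `w = conj a * d + conj c * b`. Its trace is `r` and, by the Lagrange identity
`|ab - cd|² + |w|² = p q`, its determinant is `(s/2)²`; so `‖T‖²` is the larger root of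
`t² - r t + (s/2)²`, which is `((√(r + s) + √(r - s)) / 2)²`.
-/

open ComplexConjugate

lemma ContinuousLinearMap.opNorm_eq_of_sq_le_of_sq_eq {𝕜 E F : Type*} [NontriviallyNormedField 𝕜]
    [NormedAddCommGroup E] [NormedSpace 𝕜 E] [SeminormedAddCommGroup F] [NormedSpace 𝕜 F]
    (f : E →L[𝕜] F) {M : ℝ} (hM : 0 ≤ M) (hle : ∀ x, ‖f x‖ ^ 2 ≤ M ^ 2 * ‖x‖ ^ 2)
    {x₀ : E} (hx₀ : x₀ ≠ 0) (heq : ‖f x₀‖ ^ 2 = M ^ 2 * ‖x₀‖ ^ 2) : ‖f‖ = M := by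
  have hbound : ∀ x, ‖f x‖ ≤ M * ‖x‖ := fun x =>
    (pow_le_pow_iff_left₀ (norm_nonneg _) (by positivity) two_ne_zero).1
      (by rw [mul_pow]; exact hle x)
  refine le_antisymm (f.opNorm_le_bound hM hbound) ?_
  have hfx₀ : ‖f x₀‖ = M * ‖x₀‖ :=
    (pow_left_inj₀ (norm_nonneg _) (by positivity) two_ne_zero).1 (by rw [mul_pow]; exact heq)
  exact le_of_mul_le_mul_right (hfx₀ ▸ f.le_opNorm x₀) (norm_pos_iff.2 hx₀)

lemma two_mul_mul_mul_le_add_of_sq_le_mul {A B W u v : ℝ} (hA : 0 ≤ A) (hB : 0 ≤ B)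
    (h : W ^ 2 ≤ A * B) : 2 * (W * u * v) ≤ A * u ^ 2 + B * v ^ 2 := by
  have hsq : (2 * (W * u * v)) ^ 2 ≤ (A * u ^ 2 + B * v ^ 2) ^ 2 := by
    nlinarith [sq_nonneg (A * u ^ 2 - B * v ^ 2), mul_nonneg (sq_nonneg u) (sq_nonneg v),
      mul_le_mul_of_nonneg_right h (mul_nonneg (sq_nonneg u) (sq_nonneg v))]
  exact (abs_le_of_sq_le_sq' hsq (by positivity)).2

/-- `(x, y) ↦ (x, y)ᴴ [[p, w], [conj w, q]] (x, y)`. -/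
noncomputable def hermitianForm₂ (p q : ℝ) (w : ℂ) (x y : ℂ) : ℝ :=
  p * ‖x‖ ^ 2 + q * ‖y‖ ^ 2 + 2 * (w * conj x * y).re

lemma hermitianForm₂_le {p q t : ℝ} {w : ℂ} (hp : p ≤ t) (hq : q ≤ t)
    (h : (t - p) * (t - q) = ‖w‖ ^ 2) (x y : ℂ) :
    hermitianForm₂ p q w x y ≤ t * (‖x‖ ^ 2 + ‖y‖ ^ 2) := by
  have hre : (w * conj x * y).re ≤ ‖w‖ * ‖x‖ * ‖y‖ := by
    simpa using Complex.re_le_norm (w * conj x * y)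
  have hamgm := two_mul_mul_mul_le_add_of_sq_le_mul (sub_nonneg.2 hp) (sub_nonneg.2 hq) h.ge
    (u := ‖x‖) (v := ‖y‖)
  unfold hermitianForm₂
  nlinarith

lemma exists_hermitianForm₂_eq {p q t : ℝ} {w : ℂ} (h : (t - p) * (t - q) = ‖w‖ ^ 2) :
    ∃ x y : ℂ, (x, y) ≠ 0 ∧ hermitianForm₂ p q w x y = t * (‖x‖ ^ 2 + ‖y‖ ^ 2) := by
  by_cases htp : t = p
  · exact ⟨1, 0, by simp, by simp [hermitianForm₂, htp]⟩
  -- `(w, t - p)` is an eigenvector for the eigenvalue `t`.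
  refine ⟨w, (t - p : ℝ), by simp [sub_eq_zero, htp], ?_⟩
  have hre : (w * conj w * ((t - p : ℝ) : ℂ)).re = ‖w‖ ^ 2 * (t - p) := by
    rw [Complex.mul_conj, ← Complex.ofReal_mul, Complex.ofReal_re, Complex.normSq_eq_norm_sq]
  rw [hermitianForm₂, hre, Complex.norm_real, Real.norm_eq_abs, sq_abs]
  linear_combination (p - t) * h

lemma Complex.sq_norm_mul_sub_mul_add_sq_norm (a b c d : ℂ) :
    ‖a * b - c * d‖ ^ 2 + ‖conj a * d + conj c * b‖ ^ 2
      = (‖a‖ ^ 2 + ‖c‖ ^ 2) * (‖d‖ ^ 2 + ‖b‖ ^ 2) := by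
  simp only [Complex.sq_norm, Complex.normSq_apply, Complex.mul_re, Complex.mul_im,
    Complex.add_re, Complex.add_im, Complex.sub_re, Complex.sub_im,
    Complex.conj_re, Complex.conj_im]
  ring

lemma sq_norm_toEuclideanCLM_fin_two_apply (a b c d : ℂ) (x : EuclideanSpace ℂ (Fin 2)) :
    ‖Matrix.toEuclideanCLM (𝕜 := ℂ) !![a, d; c, b] x‖ ^ 2
      = hermitianForm₂ (‖a‖ ^ 2 + ‖c‖ ^ 2) (‖d‖ ^ 2 + ‖b‖ ^ 2) (conj a * d + conj c * b)
          (x 0) (x 1) := by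
  have happly : ∀ i, Matrix.toEuclideanCLM (𝕜 := ℂ) !![a, d; c, b] x i
      = Matrix.mulVec !![a, d; c, b] x.ofLp i := fun _ => rfl
  rw [EuclideanSpace.norm_sq_eq, hermitianForm₂]
  simp only [Fin.sum_univ_two, happly, Matrix.mulVec, dotProduct, Matrix.of_apply,
    Matrix.cons_val', Matrix.cons_val_zero, Matrix.cons_val_one, Matrix.empty_val',
    Matrix.cons_val_fin_one, Complex.sq_norm, Complex.normSq_apply, Complex.mul_re,
    Complex.mul_im, Complex.add_re, Complex.add_im, Complex.conj_re, Complex.conj_im]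
  ring

lemma norm_toEuclideanCLM_fin_two_eq (a b c d : ℂ) {M : ℝ} (hM : 0 ≤ M)
    (hp : ‖a‖ ^ 2 + ‖c‖ ^ 2 ≤ M ^ 2) (hq : ‖d‖ ^ 2 + ‖b‖ ^ 2 ≤ M ^ 2)
    (h : (M ^ 2 - (‖a‖ ^ 2 + ‖c‖ ^ 2)) * (M ^ 2 - (‖d‖ ^ 2 + ‖b‖ ^ 2))
      = ‖conj a * d + conj c * b‖ ^ 2) :
    ‖Matrix.toEuclideanCLM (𝕜 := ℂ) !![a, d; c, b]‖ = M := by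
  obtain ⟨x, y, hxy, heq⟩ := exists_hermitianForm₂_eq h
  refine ContinuousLinearMap.opNorm_eq_of_sq_le_of_sq_eq _ hM (fun v => ?_) (x₀ := !₂[x, y]) ?_ ?_
  · rw [sq_norm_toEuclideanCLM_fin_two_apply, EuclideanSpace.norm_sq_eq, Fin.sum_univ_two]
    exact hermitianForm₂_le hp hq h _ _
  · contrapose! hxy
    simpa using hxy
  · rw [sq_norm_toEuclideanCLM_fin_two_apply, EuclideanSpace.norm_sq_eq, Fin.sum_univ_two]
    simpa using heq

lemma sq_sq_sub_mul_sq_add_sq_eq_zero_of_eq_half_sqrt_add_sqrt {r s M : ℝ} (hs : 0 ≤ s)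
    (hsr : s ≤ r) (hM : M = (√(r + s) + √(r - s)) / 2) :
    (M ^ 2) ^ 2 - r * M ^ 2 + (s / 2) ^ 2 = 0 ∧ r ≤ 2 * M ^ 2 := by
  have hplus := Real.sq_sqrt (show 0 ≤ r + s by linarith)
  have hminus := Real.sq_sqrt (show 0 ≤ r - s by linarith)
  have hprod := mul_nonneg (Real.sqrt_nonneg (r + s)) (Real.sqrt_nonneg (r - s))
  subst hM
  constructor
  · linear_combination
      (((√(r + s) + √(r - s)) / 2) ^ 2 / 2 - (s + (√(r + s) ^ 2 - √(r - s) ^ 2) / 2) / 8) * hplus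
        + (((√(r + s) + √(r - s)) / 2) ^ 2 / 2 + (s + (√(r + s) ^ 2 - √(r - s) ^ 2) / 2) / 8)
          * hminus
  · nlinarith

theorem stmt_0 (a b c d : ℂ) (r s : ℝ)
    (hr : r = ‖a‖ ^ 2 + ‖b‖ ^ 2 + ‖c‖ ^ 2 + ‖d‖ ^ 2)
    (hs : s = 2 * ‖a * b - c * d‖) :
    ‖Matrix.toEuclideanCLM (𝕜 := ℂ) (!![a, d; c, b])‖ =
      (Real.sqrt (r + s) + Real.sqrt (r - s)) / 2 := by
  set M := (√(r + s) + √(r - s)) / 2 with hM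
  have hlagrange := Complex.sq_norm_mul_sub_mul_add_sq_norm a b c d
  have hs0 : 0 ≤ s := by rw [hs]; positivity
  have hsr : s ≤ r := by
    have hsq : s ^ 2 ≤ r ^ 2 := by
      nlinarith [sq_nonneg (‖a‖ ^ 2 + ‖c‖ ^ 2 - ‖d‖ ^ 2 - ‖b‖ ^ 2),
        sq_nonneg ‖conj a * d + conj c * b‖]
    exact (abs_le_of_sq_le_sq' hsq (by rw [hr]; positivity)).2
  obtain ⟨hroot, hlarge⟩ := sq_sq_sub_mul_sq_add_sq_eq_zero_of_eq_half_sqrt_add_sqrt hs0 hsr hM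
  have hprod : (M ^ 2 - (‖a‖ ^ 2 + ‖c‖ ^ 2)) * (M ^ 2 - (‖d‖ ^ 2 + ‖b‖ ^ 2))
      = ‖conj a * d + conj c * b‖ ^ 2 := by
    linear_combination hroot + M ^ 2 * hr - hlagrange - (s + 2 * ‖a * b - c * d‖) / 4 * hs
  refine norm_toEuclideanCLM_fin_two_eq a b c d (by positivity) ?_ ?_ hprod <;>
    nlinarith [sq_nonneg ‖conj a * d + conj c * b‖]
end

section
/- A bounded linear operator A between complex Hilbert spaces K and H attains its norm (i.e., there is a unit vector x with ‖Ax‖ = ‖A‖) if and only if ‖A‖² is an eigenvalue of A*A. -/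
open ContinuousLinearMap RCLike
open scoped InnerProductSpace

theorem stmt_4 {H K : Type*} [NormedAddCommGroup H] [InnerProductSpace ℂ H] [CompleteSpace H]
    [NormedAddCommGroup K] [InnerProductSpace ℂ K] [CompleteSpace K]
    (A : K →L[ℂ] H) :
    (∃ x : K, ‖x‖ = 1 ∧ ‖A x‖ = ‖A‖) ↔
      Module.End.HasEigenvalue
        ((ContinuousLinearMap.adjoint A ∘L A : K →L[ℂ] K) : K →ₗ[ℂ] K)
        ((‖A‖ : ℂ) ^ 2) := by
  set B : K →L[ℂ] K := ContinuousLinearMap.adjoint A ∘L A with hB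
  constructor
  · rintro ⟨x, hx1, hxA⟩
    have hinner : ⟪B x, x⟫_ℂ = ⟪A x, A x⟫_ℂ := by
      rw [hB]; rw [ContinuousLinearMap.comp_apply, ContinuousLinearMap.adjoint_inner_left]
    have hre : re ⟪B x, x⟫_ℂ = ‖A‖ ^ 2 := by
      rw [hinner, inner_self_eq_norm_sq, hxA]
    have hBnorm : ‖B x‖ ≤ ‖A‖ ^ 2 := by
      calc ‖B x‖ ≤ ‖B‖ * ‖x‖ := B.le_opNorm x
        _ = ‖A‖ ^ 2 := by rw [hx1, mul_one, hB, ContinuousLinearMap.norm_adjoint_comp_self, sq]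
    have key : B x = ((‖A‖ : ℂ) ^ 2) • x := by
      have h0 : ‖B x - ((‖A‖ : ℂ) ^ 2) • x‖ ^ 2 ≤ 0 := by
        rw [@norm_sub_sq ℂ]
        have h1 : re ⟪B x, ((‖A‖ : ℂ) ^ 2) • x⟫_ℂ = ‖A‖ ^ 2 * ‖A‖ ^ 2 := by
          rw [inner_smul_right]
          have : ((‖A‖ : ℂ) ^ 2) = ((‖A‖ ^ 2 : ℝ) : ℂ) := by push_cast; ring
          simp only [RCLike.re_to_complex] at hre ⊢
          rw [this, Complex.re_ofReal_mul, hre]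
        have h2 : ‖((‖A‖ : ℂ) ^ 2) • x‖ = ‖A‖ ^ 2 := by
          rw [norm_smul, hx1, mul_one]
          simp [abs_of_nonneg (norm_nonneg A)]
        rw [h1, h2]
        nlinarith [hBnorm, norm_nonneg (B x), norm_nonneg A]
      have := sq_nonneg ‖B x - ((‖A‖ : ℂ) ^ 2) • x‖
      have : ‖B x - ((‖A‖ : ℂ) ^ 2) • x‖ = 0 := by nlinarith
      rw [norm_eq_zero, sub_eq_zero] at this
      exact this
    have hx0 : x ≠ 0 := by intro h; rw [h, norm_zero] at hx1; norm_num at hx1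
    exact Module.End.hasEigenvalue_of_hasEigenvector
      ⟨Module.End.mem_eigenspace_iff.mpr key, hx0⟩
  · intro h
    obtain ⟨x, hx⟩ := h.exists_hasEigenvector
    obtain ⟨hmem, hx0⟩ := hx
    have hBx : B x = ((‖A‖ : ℂ) ^ 2) • x := Module.End.mem_eigenspace_iff.mp hmem
    set y : K := (‖x‖ : ℂ)⁻¹ • x with hy
    have hxnorm : (0 : ℝ) < ‖x‖ := norm_pos_iff.mpr hx0
    have hy1 : ‖y‖ = 1 := by
      rw [hy, norm_smul]
      simp [abs_of_pos hxnorm, inv_mul_cancel₀ hxnorm.ne']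
    refine ⟨y, hy1, ?_⟩
    have hBy : B y = ((‖A‖ : ℂ) ^ 2) • y := by
      rw [hy, map_smul, hBx, smul_comm]
    have hAy : ‖A y‖ ^ 2 = ‖A‖ ^ 2 := by
      have h2 : ⟪A y, A y⟫_ℂ = ⟪B y, y⟫_ℂ := by
        rw [hB, ContinuousLinearMap.comp_apply, ContinuousLinearMap.adjoint_inner_left]
      have h4 : ‖A y‖ ^ 2 = re ⟪A y, A y⟫_ℂ := (inner_self_eq_norm_sq _).symm
      rw [h4, h2, hBy, inner_smul_left, inner_self_eq_norm_sq_to_K, hy1]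
      simp [map_pow, Complex.conj_ofReal, ← Complex.ofReal_pow]
    nlinarith [norm_nonneg (A y), norm_nonneg A]
end

section
/- If T ∈ B(H) is an idempotent (T² = T), then T attains its norm if and only if T + T* − I attains its norm. -/
/-!
Write `S = T + T† - 1`; then `T S = T T†`, `T† S = T† T` and `S` is self-adjoint. For `T ≠ 0` one
has `‖S‖ = ‖T‖`: splitting `y = a + b` along `range T ⊕ (range T)ᗮ`, Pythagoras gives
`‖S y‖² = ‖T† a‖² + ‖b‖² + ‖T b‖²`, and `‖T b‖² ≤ (‖T‖² - 1) ‖b‖²` because `b ⊥ T b`.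

An operator `B` attains its norm exactly along eigenvectors of `B† B` for `‖B‖²`. If `T` attains
its norm at `x`, then `S (T x) = T† T x = ‖T‖² x`, so `S` attains its norm at `T x`. Conversely,
if `S` attains its norm it has an eigenvector `z` with `S z = ±‖T‖ z`, and `T† z` is then an
eigenvector of `T† T` for `‖T‖²`, unless `T† z = 0`; in that case `T z = 0` too, so `S z = -z`,
`‖T‖ = 1`, and `T` attains its norm on its range.
-/

open scoped InnerProductSpace

theorem IsIdempotentElem.one_le_norm {R : Type*} [NonUnitalSeminormedRing R] {p : R}
    (hp : IsIdempotentElem p) (h0 : ‖p‖ ≠ 0) : 1 ≤ ‖p‖ := by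
  have hpos : 0 < ‖p‖ := (norm_nonneg p).lt_of_ne' h0
  have : ‖p‖ * 1 ≤ ‖p‖ * ‖p‖ := by simpa [hp.eq] using norm_mul_le p p
  exact le_of_mul_le_mul_left this hpos

namespace ContinuousLinearMap

variable {𝕜 E F : Type*} [RCLike 𝕜]

theorem IsIdempotentElem.apply_apply {R M : Type*} [Semiring R] [TopologicalSpace M]
    [AddCommMonoid M] [Module R M] {T : M →L[R] M} (hT : IsIdempotentElem T) (v : M) :
    T (T v) = T v :=
  DFunLike.congr_fun hT.eq v

section Normed

variable [NormedAddCommGroup E] [NormedSpace 𝕜 E] [NormedAddCommGroup F] [NormedSpace 𝕜 F]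

theorem exists_norm_eq_one_and_norm_apply_eq_opNorm (B : E →L[𝕜] F) {x : E} (hx : x ≠ 0)
    (h : ‖B x‖ = ‖B‖ * ‖x‖) : ∃ u : E, ‖u‖ = 1 ∧ ‖B u‖ = ‖B‖ := by
  refine ⟨(‖x‖⁻¹ : 𝕜) • x, norm_smul_inv_norm hx, ?_⟩
  have hx' : ‖x‖ ≠ 0 := norm_ne_zero_iff.2 hx
  rw [map_smul, norm_smul, h, norm_inv, RCLike.norm_ofReal, abs_norm]
  field_simp

theorem IsIdempotentElem.exists_norm_apply_eq_opNorm {T : E →L[𝕜] E} (hT : IsIdempotentElem T)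
    (hT0 : T ≠ 0) (hT1 : ‖T‖ = 1) : ∃ u : E, ‖u‖ = 1 ∧ ‖T u‖ = ‖T‖ := by
  obtain ⟨v, hv⟩ : ∃ v, T v ≠ 0 := by
    by_contra! h
    exact hT0 (ContinuousLinearMap.ext h)
  refine T.exists_norm_eq_one_and_norm_apply_eq_opNorm hv ?_
  rw [IsIdempotentElem.apply_apply hT, hT1, one_mul]

end Normed

variable [NormedAddCommGroup E] [InnerProductSpace 𝕜 E]

theorem norm_apply_sq_le_of_inner_apply_self_eq_zero (T : E →L[𝕜] E) (hT1 : 1 ≤ ‖T‖) {b : E}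
    (hb : T (T b) = T b) (hbo : ⟪T b, b⟫_𝕜 = 0) :
    ‖T b‖ ^ 2 ≤ (‖T‖ ^ 2 - 1) * ‖b‖ ^ 2 := by
  -- `T` maps `μ • T b + b` to `(μ + 1) • T b`; bounding this by `‖T‖` for every real `μ` gives a
  -- nonnegative quadratic in `μ`, whose discriminant yields the claim
  have key : ∀ μ : ℝ, 0 ≤ ((‖T‖ ^ 2 - 1) * ‖T b‖ ^ 2) * (μ * μ) + (-2 * ‖T b‖ ^ 2) * μ
      + (‖T‖ ^ 2 * ‖b‖ ^ 2 - ‖T b‖ ^ 2) := by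
    intro μ
    have himage : T ((μ : 𝕜) • T b + b) = ((μ + 1 : ℝ) : 𝕜) • T b := by
      rw [map_add, map_smul, hb, RCLike.ofReal_add, RCLike.ofReal_one, add_smul, one_smul]
    have hnorm : ‖(μ : 𝕜) • T b + b‖ ^ 2 = μ ^ 2 * ‖T b‖ ^ 2 + ‖b‖ ^ 2 := by
      rw [norm_add_sq (𝕜 := 𝕜), inner_smul_left, hbo, mul_zero, norm_smul, RCLike.norm_ofReal,
        mul_pow, sq_abs]
      simp
    have hle := T.le_opNorm ((μ : 𝕜) • T b + b)
    rw [himage, norm_smul, RCLike.norm_ofReal] at hle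
    have hsq := pow_le_pow_left₀ (by positivity) hle 2
    rw [mul_pow, sq_abs, mul_pow, hnorm] at hsq
    nlinarith
  have hdisc := discrim_le_zero key
  unfold discrim at hdisc
  rcases (sq_nonneg ‖T b‖).eq_or_lt with h0 | hpos
  · rw [← h0]
    have : 0 ≤ ‖T‖ ^ 2 - 1 := by nlinarith
    positivity
  · have htpos : 0 < ‖T‖ ^ 2 := by positivity
    have : ‖T b‖ ^ 2 ≤ (‖T‖ ^ 2 - 1) * (‖T‖ ^ 2 * ‖b‖ ^ 2 - ‖T b‖ ^ 2) := by nlinarith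
    nlinarith

variable [CompleteSpace E]

theorem isSelfAdjoint_add_adjoint_sub_one (T : E →L[𝕜] E) :
    IsSelfAdjoint (T + adjoint T - 1) := by
  rw [← star_eq_adjoint]
  exact (IsSelfAdjoint.add_star_self T).sub (.one _)

theorem isIdempotentElem_adjoint {T : E →L[𝕜] E} (hT : IsIdempotentElem T) :
    IsIdempotentElem (adjoint T) := by
  rw [← star_eq_adjoint]
  exact IsIdempotentElem.star_iff.2 hT

theorem IsIdempotentElem.norm_add_adjoint_sub_one_apply_sq {T : E →L[𝕜] E}
    (hT : IsIdempotentElem T) (y : E) :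
    ‖(T + adjoint T - 1) y‖ ^ 2 = ‖T y‖ ^ 2 + ‖adjoint T y - y‖ ^ 2 := by
  have horth : ⟪T y, adjoint T y - y⟫_𝕜 = 0 := by
    rw [inner_sub_right, adjoint_inner_right, IsIdempotentElem.apply_apply hT, sub_self]
  have hpyth := norm_add_sq_eq_norm_sq_add_norm_sq_of_inner_eq_zero _ _ horth
  simp only [← sq] at hpyth
  rw [← hpyth, add_sub_assoc]
  rfl

theorem IsIdempotentElem.norm_apply_le_norm_add_adjoint_sub_one_apply {T : E →L[𝕜] E}
    (hT : IsIdempotentElem T) (y : E) : ‖T y‖ ≤ ‖(T + adjoint T - 1) y‖ := by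
  refine (pow_le_pow_iff_left₀ (norm_nonneg _) (norm_nonneg _) two_ne_zero).1 ?_
  rw [IsIdempotentElem.norm_add_adjoint_sub_one_apply_sq hT]
  exact le_add_of_nonneg_right (sq_nonneg _)

theorem IsIdempotentElem.norm_add_adjoint_sub_one_apply_le {T : E →L[𝕜] E}
    (hT : IsIdempotentElem T) (hT1 : 1 ≤ ‖T‖) (y : E) :
    ‖(T + adjoint T - 1) y‖ ≤ ‖T‖ * ‖y‖ := by
  have : CompleteSpace T.range := (IsIdempotentElem.isClosed_range hT).completeSpace_coe
  obtain ⟨a, ha, b, hb, rfl⟩ := T.range.exists_add_mem_mem_orthogonal y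
  have hTa : T a = a := by
    obtain ⟨v, rfl⟩ := ha
    exact IsIdempotentElem.apply_apply hT v
  have hT'b : adjoint T b = 0 := by rwa [orthogonal_range] at hb
  have hbo : ⟪T b, b⟫_𝕜 = 0 :=
    Submodule.inner_right_of_mem_orthogonal (LinearMap.mem_range_self (T : E →ₗ[𝕜] E) b) hb
  have hS : ‖(T + adjoint T - 1) (a + b)‖ ^ 2 = ‖adjoint T a‖ ^ 2 + (‖T b‖ ^ 2 + ‖b‖ ^ 2) := by
    have :=
      IsIdempotentElem.norm_add_adjoint_sub_one_apply_sq (isIdempotentElem_adjoint hT) (a + b)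
    rw [adjoint_adjoint, add_comm (adjoint T)] at this
    rw [this, map_add, map_add, hT'b, add_zero, hTa, add_sub_add_left_eq_sub,
      norm_sub_sq (𝕜 := 𝕜), hbo]
    simp
  have hy : ‖a + b‖ ^ 2 = ‖a‖ ^ 2 + ‖b‖ ^ 2 := by
    rw [norm_add_sq (𝕜 := 𝕜), Submodule.inner_right_of_mem_orthogonal ha hb]
    simp
  have hT'a : ‖adjoint T a‖ ≤ ‖T‖ * ‖a‖ := by
    simpa only [LinearIsometryEquiv.norm_map] using (adjoint T).le_opNorm a
  have hTb := norm_apply_sq_le_of_inner_apply_self_eq_zero T hT1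
    (IsIdempotentElem.apply_apply hT b) hbo
  refine (pow_le_pow_iff_left₀ (norm_nonneg _) (by positivity) two_ne_zero).1 ?_
  rw [hS, mul_pow, hy]
  nlinarith [pow_le_pow_left₀ (norm_nonneg _) hT'a 2]

theorem IsIdempotentElem.norm_add_adjoint_sub_one {T : E →L[𝕜] E} (hT : IsIdempotentElem T)
    (hT0 : T ≠ 0) : ‖T + adjoint T - 1‖ = ‖T‖ := by
  have hT1 := hT.one_le_norm (norm_ne_zero_iff.2 hT0)
  refine le_antisymm (opNorm_le_bound _ (norm_nonneg _)
    (IsIdempotentElem.norm_add_adjoint_sub_one_apply_le hT hT1)) (opNorm_le_bound _ (norm_nonneg _)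
    fun y => (IsIdempotentElem.norm_apply_le_norm_add_adjoint_sub_one_apply hT y).trans
      (le_opNorm _ _))

section Attainment

variable [NormedAddCommGroup F] [InnerProductSpace 𝕜 F] [CompleteSpace F]

theorem adjoint_apply_apply_eq_of_norm_apply_eq (B : E →L[𝕜] F) {x : E} (hx : ‖x‖ = 1)
    (h : ‖B x‖ = ‖B‖) : adjoint B (B x) = ((‖B‖ ^ 2 : ℝ) : 𝕜) • x := by
  have hle : ‖adjoint B (B x)‖ ≤ ‖B‖ ^ 2 := by
    calc ‖adjoint B (B x)‖ ≤ ‖adjoint B‖ * ‖B x‖ := le_opNorm _ _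
      _ = ‖B‖ ^ 2 := by rw [LinearIsometryEquiv.norm_map, h, sq]
  have hinner : ⟪adjoint B (B x), x⟫_𝕜 = ((‖B‖ ^ 2 : ℝ) : 𝕜) := by
    rw [adjoint_inner_left, inner_self_eq_norm_sq_to_K, h]
    push_cast
    rfl
  have hsq : ‖adjoint B (B x) - ((‖B‖ ^ 2 : ℝ) : 𝕜) • x‖ ^ 2 ≤ 0 := by
    rw [norm_sub_sq (𝕜 := 𝕜), inner_smul_right, hinner, norm_smul, hx, RCLike.norm_ofReal,
      ← RCLike.ofReal_mul, RCLike.ofReal_re, mul_one, abs_pow, abs_norm]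
    nlinarith [pow_le_pow_left₀ (norm_nonneg _) hle 2]
  rw [← sub_eq_zero, ← norm_eq_zero]
  exact pow_eq_zero_iff two_ne_zero |>.1 (le_antisymm hsq (sq_nonneg _))

theorem norm_apply_eq_of_adjoint_apply_apply_eq (B : E →L[𝕜] F) {x : E} {r : ℝ} (hr : 0 ≤ r)
    (h : adjoint B (B x) = ((r ^ 2 : ℝ) : 𝕜) • x) : ‖B x‖ = r * ‖x‖ := by
  refine (sq_eq_sq₀ (norm_nonneg _) (by positivity)).1 ?_
  rw [apply_norm_sq_eq_inner_adjoint_right, comp_apply, h, inner_smul_right,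
    inner_self_eq_norm_sq_to_K, ← RCLike.ofReal_pow, ← RCLike.ofReal_mul, RCLike.ofReal_re,
    mul_pow]

end Attainment

theorem IsSelfAdjoint.exists_apply_eq_smul_of_norm_apply_eq {S : E →L[𝕜] E}
    (hS : IsSelfAdjoint S) {y : E} (hy : ‖y‖ = 1) (h : ‖S y‖ = ‖S‖) :
    ∃ z ≠ 0, ∃ μ : ℝ, |μ| = ‖S‖ ∧ S z = (μ : 𝕜) • z := by
  have hSS : S (S y) = ((‖S‖ ^ 2 : ℝ) : 𝕜) • y := by
    simpa only [hS.adjoint_eq] using adjoint_apply_apply_eq_of_norm_apply_eq S hy h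
  -- `S ^ 2 - ‖S‖ ^ 2 = (S - ‖S‖) (S + ‖S‖)` kills `y`
  by_cases hz : S y + (‖S‖ : 𝕜) • y = 0
  · refine ⟨y, norm_ne_zero_iff.1 (by simp [hy]), -‖S‖, by simp, ?_⟩
    rw [eq_neg_of_add_eq_zero_left hz, RCLike.ofReal_neg, neg_smul]
  · refine ⟨_, hz, ‖S‖, abs_norm _, ?_⟩
    rw [map_add, map_smul, hSS, smul_add, smul_smul]
    push_cast
    rw [sq, add_comm]

theorem IsIdempotentElem.exists_norm_add_adjoint_sub_one_apply_eq {T : E →L[𝕜] E}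
    (hT : IsIdempotentElem T) (hT0 : T ≠ 0) {x : E} (hx : ‖x‖ = 1) (h : ‖T x‖ = ‖T‖) :
    ∃ u : E, ‖u‖ = 1 ∧ ‖(T + adjoint T - 1) u‖ = ‖T + adjoint T - 1‖ := by
  have hSTx : (T + adjoint T - 1) (T x) = ((‖T‖ ^ 2 : ℝ) : 𝕜) • x := by
    rw [← adjoint_apply_apply_eq_of_norm_apply_eq T hx h]
    simp [IsIdempotentElem.apply_apply hT]
  refine exists_norm_eq_one_and_norm_apply_eq_opNorm _ (x := T x)
    (norm_ne_zero_iff.1 (h ▸ norm_ne_zero_iff.2 hT0)) ?_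
  rw [hSTx, norm_smul, hx, IsIdempotentElem.norm_add_adjoint_sub_one hT hT0, h,
    RCLike.norm_ofReal, abs_pow, abs_norm, mul_one, sq]

theorem IsIdempotentElem.exists_norm_apply_eq_of_add_adjoint_sub_one_apply_eq_smul
    {T : E →L[𝕜] E} (hT : IsIdempotentElem T) (hT0 : T ≠ 0) {z : E} (hz : z ≠ 0) {μ : ℝ}
    (hμ : |μ| = ‖T‖) (hSz : (T + adjoint T - 1) z = (μ : 𝕜) • z) :
    ∃ u : E, ‖u‖ = 1 ∧ ‖T u‖ = ‖T‖ := by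
  have hTS : ∀ v, T ((T + adjoint T - 1) v) = T (adjoint T v) := fun v => by
    simp [IsIdempotentElem.apply_apply hT]
  have hT'S : ∀ v, adjoint T ((T + adjoint T - 1) v) = adjoint T (T v) := fun v => by
    simp [IsIdempotentElem.apply_apply (isIdempotentElem_adjoint hT)]
  have heig : adjoint T (T (adjoint T z)) = ((|μ| ^ 2 : ℝ) : 𝕜) • adjoint T z := by
    rw [← hTS, hSz, map_smul, map_smul, ← hT'S, hSz, map_smul, smul_smul, sq_abs]
    push_cast
    rw [sq]
  by_cases hw : adjoint T z = 0
  · have hTz : T z = 0 := by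
      have : adjoint T (T z) = 0 := by rw [← hT'S, hSz, map_smul, hw, smul_zero]
      simpa [this] using apply_norm_sq_eq_inner_adjoint_right T z
    have hμ1 : μ = -1 := by
      have : ((μ + 1 : ℝ) : 𝕜) • z = 0 := by
        push_cast
        rw [add_smul, ← hSz]
        simp [hTz, hw]
      rw [smul_eq_zero, RCLike.ofReal_eq_zero, add_eq_zero_iff_eq_neg] at this
      exact this.resolve_right hz
    exact IsIdempotentElem.exists_norm_apply_eq_opNorm hT hT0 (by rw [← hμ, hμ1]; norm_num)
  · exact exists_norm_eq_one_and_norm_apply_eq_opNorm T hw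
      (by rw [norm_apply_eq_of_adjoint_apply_apply_eq T (abs_nonneg μ) heig, hμ])

end ContinuousLinearMap

open ContinuousLinearMap

theorem stmt_8 {H : Type*} [NormedAddCommGroup H] [InnerProductSpace ℂ H] [CompleteSpace H]
    (T : H →L[ℂ] H) (hT : T ∘L T = T) :
    (∃ x : H, ‖x‖ = 1 ∧ ‖T x‖ = ‖T‖) ↔
      (∃ x : H, ‖x‖ = 1 ∧
        ‖(T + ContinuousLinearMap.adjoint T - 1) x‖ =
          ‖T + ContinuousLinearMap.adjoint T - 1‖) := by
  by_cases hT0 : T = 0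
  · subst hT0
    refine ⟨fun ⟨x, hx, _⟩ => ?_, fun ⟨x, hx, _⟩ => ⟨x, hx, by simp⟩⟩
    have : Nontrivial H := ⟨x, 0, ne_zero_of_norm_ne_zero (hx ▸ one_ne_zero)⟩
    exact ⟨x, hx, by simp [hx]⟩
  refine ⟨fun ⟨x, hx, h⟩ => IsIdempotentElem.exists_norm_add_adjoint_sub_one_apply_eq hT hT0 hx h,
    fun ⟨y, hy, h⟩ => ?_⟩
  obtain ⟨z, hz, μ, hμ, hSz⟩ := IsSelfAdjoint.exists_apply_eq_smul_of_norm_apply_eq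
    (isSelfAdjoint_add_adjoint_sub_one T) hy h
  rw [IsIdempotentElem.norm_add_adjoint_sub_one hT hT0] at hμ
  exact IsIdempotentElem.exists_norm_apply_eq_of_add_adjoint_sub_one_apply_eq_smul hT hT0 hz hμ hSz
end

section
/- Fix a, b, c ∈ ℂ and for d ≥ 0 let S_d = [[a, d], [cd, b]]. Then a, b ∈ W(S_d), and W(S_{d₁}) ⊆ W(S_{d₂}) whenever 0 ≤ d₁ < d₂. -/
/-!
The numerical range of any operator is convex (Toeplitz–Hausdorff). After an affine change of the
operator it suffices to fill in the segment from `0 = ⟪u, T u⟫` to `1 = ⟪v, T v⟫`; once the phase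
of `u` is chosen so that `⟪u, T v⟫ + ⟪v, T u⟫` is real, the normalised quadratic form is real along
the real line through `u` and `v`, and the intermediate value theorem applies.

For `S_d`, the quadratic form at a unit vector `x` is `α + d β`, and at `x` with the sign of `x 1`
flipped it is `α - d β`. Hence for `0 ≤ d₁ < d₂` the value `α + d₁ β` is a convex combination of
two points of `W(S_{d₂})`.
-/

/-- The numerical range of a `2 × 2` complex matrix. -/
noncomputable def numRange (M : Matrix (Fin 2) (Fin 2) ℂ) : Set ℂ :=
  {z | ∃ x : EuclideanSpace ℂ (Fin 2), ‖x‖ = 1 ∧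
    z = inner (𝕜 := ℂ) x (Matrix.toEuclideanCLM (𝕜 := ℂ) M x)}

open scoped ComplexConjugate InnerProductSpace

namespace ContinuousLinearMap

variable {E : Type*} [NormedAddCommGroup E] [InnerProductSpace ℂ E] (T : E →L[ℂ] E)

def numericalRange : Set ℂ := {z | ∃ x : E, ‖x‖ = 1 ∧ z = ⟪x, T x⟫_ℂ}

lemma inner_div_normSq_mem_numericalRange {y : E} (hy : y ≠ 0) :
    ⟪y, T y⟫_ℂ / (‖y‖ ^ 2 : ℂ) ∈ T.numericalRange := by
  have hy' : (‖y‖ : ℂ) ≠ 0 := by exact_mod_cast norm_ne_zero_iff.2 hy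
  refine ⟨(‖y‖⁻¹ : ℂ) • y, ?_, ?_⟩
  · rw [norm_smul, norm_inv, Complex.norm_real, norm_norm, inv_mul_cancel₀ (norm_ne_zero_iff.2 hy)]
  · rw [map_smul, inner_smul_left, inner_smul_right, map_inv₀, Complex.conj_ofReal]
    field_simp

lemma ofReal_mem_numericalRange_of_im_inner_add_inner_eq_zero {u v : E} (hu : ‖u‖ = 1) (hv : ‖v‖ = 1)
    (hu0 : ⟪u, T u⟫_ℂ = 0) (hv1 : ⟪v, T v⟫_ℂ = 1) (hκ : (⟪u, T v⟫_ℂ + ⟪v, T u⟫_ℂ).im = 0)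
    {t : ℝ} (ht : t ∈ Set.Icc (0 : ℝ) 1) : (t : ℂ) ∈ T.numericalRange := by
  set κ := ⟪u, T v⟫_ℂ + ⟪v, T u⟫_ℂ
  let x : ℝ → E := fun s => ((1 - s : ℝ) : ℂ) • u + (s : ℂ) • v
  have hquad : ∀ s, ⟪x s, T (x s)⟫_ℂ = ((s ^ 2 + s * (1 - s) * κ.re : ℝ) : ℂ) := by
    intro s
    have hκ' : κ = (κ.re : ℂ) := by rw [← Complex.re_add_im κ, hκ]; simp
    simp only [x, map_add, map_smul, inner_add_left, inner_add_right, inner_smul_left,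
      inner_smul_right, Complex.conj_ofReal, hu0, hv1]
    push_cast
    rw [← hκ']
    ring
  -- `s • v = -(1 - s) • u` would give `s ^ 2 = ⟪s v, T (s v)⟫ = (1 - s) ^ 2 ⟪u, T u⟫ = 0`
  have hx_ne : ∀ s, x s ≠ 0 := by
    intro s hs
    have hsv : (s : ℂ) • v = -(((1 - s : ℝ) : ℂ) • u) := eq_neg_of_add_eq_zero_right hs
    have h := congrArg (fun y => ⟪y, T y⟫_ℂ) hsv
    simp only [map_smul, map_neg, inner_smul_left, inner_smul_right, inner_neg_neg, hu0, hv1,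
      Complex.conj_ofReal, mul_zero, mul_one] at h
    have hs0 : s = 0 := by exact_mod_cast mul_self_eq_zero.1 h
    simp [x, hs0] at hs
    simp [hs] at hu
  let f : ℝ → ℝ := fun s => (s ^ 2 + s * (1 - s) * κ.re) / ‖x s‖ ^ 2
  have hf : ContinuousOn f (Set.Icc 0 1) := by
    refine ContinuousOn.div (by fun_prop) (by fun_prop) fun s _ => ?_
    exact pow_ne_zero 2 (norm_ne_zero_iff.2 (hx_ne s))
  have hf0 : f 0 = 0 := by simp [f]
  have hf1 : f 1 = 1 := by simp [f, x, hv]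
  obtain ⟨s, -, hs⟩ := intermediate_value_Icc zero_le_one hf (by rwa [hf0, hf1])
  rw [← hs]
  convert T.inner_div_normSq_mem_numericalRange (hx_ne s) using 1
  push_cast [f, hquad]
  rfl

lemma exists_phase_im_inner_add_inner_eq_zero (u v : E) :
    ∃ γ : ℂ, ‖γ‖ = 1 ∧ (⟪γ • u, T v⟫_ℂ + ⟪v, T (γ • u)⟫_ℂ).im = 0 := by
  set δ := ⟪u, T v⟫_ℂ - conj ⟪v, T u⟫_ℂ
  set γ := Complex.exp (δ.arg * Complex.I)
  have hγ : ‖γ‖ = 1 := Complex.norm_exp_ofReal_mul_I _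
  refine ⟨γ, hγ, ?_⟩
  have hδ : conj γ * δ = ‖δ‖ := by
    calc conj γ * δ = conj γ * (‖δ‖ * γ) := by rw [Complex.norm_mul_exp_arg_mul_I]
      _ = ‖δ‖ * (conj γ * γ) := by ring
      _ = ‖δ‖ := by rw [Complex.conj_mul', hγ]; simp
  have key : ⟪γ • u, T v⟫_ℂ + ⟪v, T (γ • u)⟫_ℂ = conj γ * δ + 2 * (γ * ⟪v, T u⟫_ℂ).re := by
    rw [inner_smul_left, map_smul, inner_smul_right, Complex.re_eq_add_conj]
    simp only [δ, map_mul]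
    ring
  rw [key, hδ]
  simp

lemma ofReal_mem_numericalRange_of_zero_one_mem (h0 : 0 ∈ T.numericalRange)
    (h1 : 1 ∈ T.numericalRange) {t : ℝ} (ht : t ∈ Set.Icc (0 : ℝ) 1) :
    (t : ℂ) ∈ T.numericalRange := by
  obtain ⟨u, hu, hu0⟩ := h0
  obtain ⟨v, hv, hv1⟩ := h1
  obtain ⟨γ, hγ, hκ⟩ := T.exists_phase_im_inner_add_inner_eq_zero u v
  refine T.ofReal_mem_numericalRange_of_im_inner_add_inner_eq_zero (u := γ • u) ?_ hv ?_ hv1.symm hκ ht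
  · rw [norm_smul, hγ, hu, one_mul]
  · rw [map_smul, inner_smul_left, inner_smul_right, ← hu0, mul_zero, mul_zero]

lemma inner_smul_sub_smul_one_apply (w q : ℂ) {x : E} (hx : ‖x‖ = 1) :
    ⟪x, (w • (T - q • 1)) x⟫_ℂ = w * (⟪x, T x⟫_ℂ - q) := by
  simp [inner_self_eq_norm_sq_to_K, hx]

theorem convex_numericalRange : Convex ℝ T.numericalRange := by
  intro p hp q hq a b ha hb hab
  obtain rfl | hpq := eq_or_ne p q
  · rwa [← add_smul, hab, one_smul]
  set T' := (p - q)⁻¹ • (T - q • 1)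
  have hT' : ∀ {x : E}, ‖x‖ = 1 → ⟪x, T' x⟫_ℂ = (p - q)⁻¹ * (⟪x, T x⟫_ℂ - q) :=
    T.inner_smul_sub_smul_one_apply _ _
  have h0 : 0 ∈ T'.numericalRange := by
    obtain ⟨x, hx, rfl⟩ := hq
    exact ⟨x, hx, by rw [hT' hx, sub_self, mul_zero]⟩
  have h1 : 1 ∈ T'.numericalRange := by
    obtain ⟨x, hx, rfl⟩ := hp
    exact ⟨x, hx, by rw [hT' hx, inv_mul_cancel₀ (sub_ne_zero.2 hpq)]⟩
  obtain ⟨x, hx, hxa⟩ := T'.ofReal_mem_numericalRange_of_zero_one_mem h0 h1 ⟨ha, by linarith⟩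
  refine ⟨x, hx, ?_⟩
  rw [hT' hx, eq_inv_mul_iff_mul_eq₀ (sub_ne_zero.2 hpq)] at hxa
  have hb' : (b : ℂ) = 1 - a := by exact_mod_cast eq_sub_of_add_eq' hab
  rw [Complex.real_smul, Complex.real_smul, hb']
  linear_combination hxa

end ContinuousLinearMap

namespace Matrix

lemma diag_mem_numericalRange {n : Type*} [Fintype n] [DecidableEq n] (M : Matrix n n ℂ) (i : n) :
    M i i ∈ (toEuclideanCLM (𝕜 := ℂ) M).numericalRange :=
  ⟨EuclideanSpace.single i 1, by simp, by simp [PiLp.inner_apply, mulVec, dotProduct]⟩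

lemma inner_toEuclideanCLM_fin_two (M : Matrix (Fin 2) (Fin 2) ℂ) (x : EuclideanSpace ℂ (Fin 2)) :
    ⟪x, toEuclideanCLM (𝕜 := ℂ) M x⟫_ℂ =
      conj (x 0) * (M 0 0 * x 0 + M 0 1 * x 1) + conj (x 1) * (M 1 0 * x 0 + M 1 1 * x 1) := by
  simp [PiLp.inner_apply, Fin.sum_univ_two, mulVec, dotProduct]
  ring

end Matrix

lemma EuclideanSpace.norm_fin_two_neg_snd (x : EuclideanSpace ℂ (Fin 2)) :
    ‖!₂[x 0, -x 1]‖ = ‖x‖ := by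
  simp [EuclideanSpace.norm_eq, Fin.sum_univ_two]

lemma numRange_eq_numericalRange (M : Matrix (Fin 2) (Fin 2) ℂ) :
    numRange M = (Matrix.toEuclideanCLM (𝕜 := ℂ) M).numericalRange :=
  rfl

theorem stmt_10 (a b c : ℂ) (S : ℝ → Matrix (Fin 2) (Fin 2) ℂ)
    (hS : ∀ d : ℝ, S d = !![a, (d : ℂ); c * d, b]) :
    (∀ d : ℝ, 0 ≤ d → a ∈ numRange (S d) ∧ b ∈ numRange (S d)) ∧
    (∀ d₁ d₂ : ℝ, 0 ≤ d₁ → d₁ < d₂ → numRange (S d₁) ⊆ numRange (S d₂)) := by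
  simp only [numRange_eq_numericalRange]
  refine ⟨fun d _ => ⟨?_, ?_⟩, fun d₁ d₂ hd₁ hlt z ⟨x, hx, hz⟩ => ?_⟩
  · simpa [hS] using (S d).diag_mem_numericalRange 0
  · simpa [hS] using (S d).diag_mem_numericalRange 1
  have hd₂ : 0 < d₂ := hd₁.trans_lt hlt
  set t := (1 + d₁ / d₂) / 2 with ht
  have ht₀ : 0 ≤ t := by positivity
  have ht₁ : 0 ≤ 1 - t := by linarith [(div_lt_one hd₂).2 hlt]
  have htd : (2 * t - 1 : ℂ) * d₂ = d₁ := by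
    have : (d₂ : ℂ) ≠ 0 := by exact_mod_cast hd₂.ne'
    rw [ht]
    push_cast
    field_simp
    ring
  have hz' : z = t • ⟪x, Matrix.toEuclideanCLM (𝕜 := ℂ) (S d₂) x⟫_ℂ
      + (1 - t) • ⟪!₂[x 0, -x 1], Matrix.toEuclideanCLM (𝕜 := ℂ) (S d₂) !₂[x 0, -x 1]⟫_ℂ := by
    simp only [hz, hS, Matrix.inner_toEuclideanCLM_fin_two, Complex.real_smul]
    simp only [Matrix.of_apply, Matrix.cons_val', Matrix.cons_val_zero, Matrix.cons_val_fin_one,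
      Matrix.cons_val_one, Complex.ofReal_sub, Complex.ofReal_one, mul_neg, map_neg, neg_mul]
    linear_combination -(conj (x 0) * x 1 + c * x 0 * conj (x 1)) * htd
  rw [hz']
  exact (Matrix.toEuclideanCLM (𝕜 := ℂ) (S d₂)).convex_numericalRange ⟨x, hx, rfl⟩
    ⟨_, (EuclideanSpace.norm_fin_two_neg_snd x).trans hx, rfl⟩ ht₀ ht₁ (by ring)
end

section
/- For a 2×2 complex matrix A with eigenvalues λ₁, λ₂, the numerical range W(A) is the closed elliptical disk with foci λ₁, λ₂ and minor axis of length √(tr(A*A) − |λ₁|² − |λ₂|²). -/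
open Matrix

/-!
A unit eigenvector for `λ₁`, completed to an orthonormal basis, makes `A` unitarily similar to
`T = !![λ₁, b; 0, λ₂]`; unitary similarity changes neither the numerical range nor `tr(AᴴA)`, and
`tr(TᴴT) = |λ₁|² + |b|² + |λ₂|²`, so the minor axis is `|b|`.

For a unit vector `x`, `⟨x, Tx⟩ = c + u a + w` with `c = (λ₁ + λ₂)/2`, `a = (λ₁ - λ₂)/2`,
`u = |x₀|² - |x₁|² ∈ [-1, 1]` and `w = b x̄₀ x₁`, `|w|² = (|b|/2)² (1 - u²)`, and all such `(u, w)`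
occur. So `W(T) - c` is the union over `u` of the circles `|z - u a| = β √(1 - u²)`, `β = |b|/2`.
With `α² = |a|² + β²`, `R = Re(ā z)` and `D = α²β² + R² - α²|z|²`, the identity
`α² (|z - u a|² - β² (1 - u²)) = (α² u - R)² - D` (the case `u = ±1` gives `α²|z ∓ a|²`)
shows that this union and the elliptical disk `|z - a| + |z + a| ≤ 2α` are both the set
`{D ≥ 0, |R| ≤ α²}`.
-/

open ComplexConjugate

lemma norm_eq_one_iff_star_dotProduct {n : Type*} [Fintype n] (x : EuclideanSpace ℂ n) :
    ‖x‖ = 1 ↔ star (WithLp.ofLp x) ⬝ᵥ WithLp.ofLp x = 1 := by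
  have h := (inner_self_eq_norm_sq_to_K (𝕜 := ℂ) x)
  rw [EuclideanSpace.inner_eq_star_dotProduct, dotProduct_comm] at h
  rw [h, RCLike.ofReal_eq_complex_ofReal, ← Complex.ofReal_pow, Complex.ofReal_eq_one,
    pow_eq_one_iff_of_nonneg (norm_nonneg x) two_ne_zero]

lemma numRange_eq_setOf_dotProduct (M : Matrix (Fin 2) (Fin 2) ℂ) :
    numRange M = {z | ∃ x : Fin 2 → ℂ, star x ⬝ᵥ x = 1 ∧ z = star x ⬝ᵥ M *ᵥ x} := by
  ext z
  simp only [numRange, Set.mem_ofPred_eq, norm_eq_one_iff_star_dotProduct,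
    EuclideanSpace.inner_eq_star_dotProduct, ofLp_toEuclideanCLM]
  constructor
  · rintro ⟨x, hx, rfl⟩
    exact ⟨_, hx, dotProduct_comm _ _⟩
  · rintro ⟨x, hx, rfl⟩
    exact ⟨WithLp.toLp 2 x, hx, dotProduct_comm _ _⟩

lemma star_dotProduct_conj_mulVec {n R : Type*} [Fintype n] [CommSemiring R] [StarRing R]
    (U T : Matrix n n R) (x : n → R) :
    star x ⬝ᵥ (U * T * star U) *ᵥ x = star (star U *ᵥ x) ⬝ᵥ T *ᵥ (star U *ᵥ x) := by
  rw [star_mulVec, ← dotProduct_mulVec, mulVec_mulVec, mulVec_mulVec, star_eq_conjTranspose,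
    conjTranspose_conjTranspose, Matrix.mul_assoc]

lemma numRange_unitary_conj {U : Matrix (Fin 2) (Fin 2) ℂ} (hU : U ∈ unitaryGroup (Fin 2) ℂ)
    (T : Matrix (Fin 2) (Fin 2) ℂ) : numRange (U * T * star U) = numRange T := by
  have hU' : U * star U = 1 := mem_unitaryGroup_iff.mp hU
  have hnorm (x : Fin 2 → ℂ) : star (star U *ᵥ x) ⬝ᵥ (star U *ᵥ x) = star x ⬝ᵥ x := by
    have h := star_dotProduct_conj_mulVec U 1 x
    rwa [Matrix.mul_one, hU', one_mulVec, one_mulVec, eq_comm] at h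
  ext z
  simp only [numRange_eq_setOf_dotProduct, Set.mem_ofPred_eq, star_dotProduct_conj_mulVec]
  constructor
  · rintro ⟨x, hx, rfl⟩
    exact ⟨star U *ᵥ x, (hnorm x).trans hx, rfl⟩
  · rintro ⟨y, hy, rfl⟩
    have hy' : star U *ᵥ (U *ᵥ y) = y := by
      rw [mulVec_mulVec, mem_unitaryGroup_iff'.mp hU, one_mulVec]
    refine ⟨U *ᵥ y, ?_, by rw [hy']⟩
    rw [← hnorm, hy', hy]

lemma exists_unit_eigenvector {n : Type*} [Fintype n] [DecidableEq n] (A : Matrix n n ℂ) (l : ℂ)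
    (h : (A - l • 1).det = 0) : ∃ v : n → ℂ, star v ⬝ᵥ v = 1 ∧ A *ᵥ v = l • v := by
  obtain ⟨v, hv, hAv⟩ := exists_mulVec_eq_zero_iff.mpr h
  rw [sub_mulVec, smul_mulVec, one_mulVec, sub_eq_zero] at hAv
  set r : ℝ := ‖WithLp.toLp 2 v‖
  have hr : r ≠ 0 := by simpa [r] using hv
  refine ⟨(r⁻¹ : ℂ) • v, ?_, by rw [mulVec_smul, hAv, smul_comm]⟩
  have hunit := (norm_eq_one_iff_star_dotProduct ((r⁻¹ : ℂ) • WithLp.toLp 2 v)).mp (by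
    rw [norm_smul]; simp [r, hr])
  simpa using hunit

lemma mem_unitaryGroup_of_conj_mul_add_conj_mul_eq_one {v₀ v₁ : ℂ}
    (hv : conj v₀ * v₀ + conj v₁ * v₁ = 1) :
    !![v₀, -conj v₁; v₁, conj v₀] ∈ unitaryGroup (Fin 2) ℂ := by
  rw [mem_unitaryGroup_iff']
  ext i j
  fin_cases i <;> fin_cases j <;>
    simp [mul_apply, Fin.sum_univ_two] <;> first | linear_combination hv | ring

lemma exists_unitary_conj_upperTriangular (A : Matrix (Fin 2) (Fin 2) ℂ) (l₁ l₂ : ℂ)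
    (htr : l₁ + l₂ = A.trace) (hdet : l₁ * l₂ = A.det) :
    ∃ U ∈ unitaryGroup (Fin 2) ℂ, ∃ b : ℂ, A = U * !![l₁, b; 0, l₂] * star U := by
  have hchar : (A - l₁ • 1).det = 0 := by
    rw [trace_fin_two] at htr
    rw [det_fin_two] at hdet ⊢
    simp only [Matrix.sub_apply, Matrix.smul_apply, one_apply_eq,
      one_apply_ne (by decide : (0 : Fin 2) ≠ 1), one_apply_ne (by decide : (1 : Fin 2) ≠ 0),
      smul_eq_mul, mul_one, mul_zero, sub_zero]
    linear_combination l₁ * htr - hdet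
  obtain ⟨v, hv, hAv⟩ := exists_unit_eigenvector A l₁ hchar
  simp only [dotProduct, Fin.sum_univ_two, Pi.star_apply, Complex.star_def] at hv
  have hAv0 := congrFun hAv 0
  have hAv1 := congrFun hAv 1
  simp only [mulVec, dotProduct, Fin.sum_univ_two, Pi.smul_apply, smul_eq_mul] at hAv0 hAv1
  set U : Matrix (Fin 2) (Fin 2) ℂ := !![v 0, -conj (v 1); v 1, conj (v 0)]
  have hU : U ∈ unitaryGroup (Fin 2) ℂ := mem_unitaryGroup_of_conj_mul_add_conj_mul_eq_one hv
  have hU' : U * star U = 1 := mem_unitaryGroup_iff.mp hU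
  set T := star U * A * U
  refine ⟨U, hU, T 0 1, ?_⟩
  have hT00 : T 0 0 = l₁ := by
    simp only [T, U, mul_apply, star_apply, of_apply, cons_val', cons_val_zero, cons_val_one,
      cons_val_fin_one, RCLike.star_def, Fin.sum_univ_two]
    linear_combination conj (v 0) * hAv0 + conj (v 1) * hAv1 + l₁ * hv
  have hT10 : T 1 0 = 0 := by
    simp only [T, U, mul_apply, star_apply, of_apply, cons_val', cons_val_zero, cons_val_one,
      cons_val_fin_one, RCLike.star_def, Fin.sum_univ_two, map_neg, Complex.conj_conj, neg_mul]
    linear_combination v 0 * hAv1 - v 1 * hAv0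
  have hT11 : T 1 1 = l₂ := by
    have h := trace_mul_cycle (star U) A U
    rw [hU', Matrix.one_mul, trace_fin_two, ← htr] at h
    linear_combination h - hT00
  rw [← hT00, ← hT10, ← hT11, ← eta_fin_two T]
  simp only [T, ← Matrix.mul_assoc, hU', Matrix.one_mul]
  rw [Matrix.mul_assoc, hU', Matrix.mul_one]

lemma trace_conjTranspose_mul_self_unitary_conj {n R : Type*} [Fintype n] [DecidableEq n]
    [CommRing R] [StarRing R] {U : Matrix n n R} (hU : U ∈ unitaryGroup n R) (T : Matrix n n R) :
    ((U * T * star U)ᴴ * (U * T * star U)).trace = (Tᴴ * T).trace := by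
  have hU' : star U * U = 1 := mem_unitaryGroup_iff'.mp hU
  have hstar : (U * T * star U)ᴴ = U * Tᴴ * star U := by
    simp only [conjTranspose_mul, star_eq_conjTranspose, conjTranspose_conjTranspose,
      Matrix.mul_assoc]
  rw [hstar, show U * Tᴴ * star U * (U * T * star U) = U * (Tᴴ * T) * star U by
      simp only [Matrix.mul_assoc, ← Matrix.mul_assoc (star U) U, hU', Matrix.one_mul],
    trace_mul_cycle, hU', Matrix.one_mul]

lemma re_trace_conjTranspose_mul_self_upperTriangular (l₁ b l₂ : ℂ) :
    ((!![l₁, b; 0, l₂])ᴴ * !![l₁, b; 0, l₂]).trace.re = ‖l₁‖ ^ 2 + ‖b‖ ^ 2 + ‖l₂‖ ^ 2 := by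
  simp only [trace_fin_two, mul_apply, conjTranspose_apply, of_apply, cons_val', cons_val_zero,
    cons_val_one, cons_val_fin_one, RCLike.star_def, Fin.sum_univ_two, map_zero, mul_zero,
    add_zero, Complex.add_re, Complex.mul_re, Complex.conj_re, Complex.conj_im, Complex.sq_norm,
    Complex.normSq_apply]
  ring

lemma star_dotProduct_upperTriangular_mulVec (l₁ b l₂ : ℂ) (x : Fin 2 → ℂ) :
    star x ⬝ᵥ !![l₁, b; 0, l₂] *ᵥ x
      = l₁ * ‖x 0‖ ^ 2 + l₂ * ‖x 1‖ ^ 2 + b * (conj (x 0) * x 1) := by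
  simp only [dotProduct, Pi.star_apply, RCLike.star_def, mulVec, of_apply, cons_val',
    cons_val_fin_one, Fin.sum_univ_two, cons_val_zero, cons_val_one, zero_mul, zero_add,
    ← Complex.conj_mul']
  ring

lemma star_dotProduct_self_fin_two (x : Fin 2 → ℂ) :
    star x ⬝ᵥ x = ‖x 0‖ ^ 2 + ‖x 1‖ ^ 2 := by
  simp [dotProduct, Fin.sum_univ_two, ← Complex.conj_mul']

lemma exists_norm_sq_eq_and_mul_conj_mul_eq (b w : ℂ) {u : ℝ} (hu : u ^ 2 ≤ 1)
    (hw : ‖w‖ ^ 2 = (‖b‖ / 2) ^ 2 * (1 - u ^ 2)) :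
    ∃ x : Fin 2 → ℂ, ‖x 0‖ ^ 2 = (1 + u) / 2 ∧ ‖x 1‖ ^ 2 = (1 - u) / 2 ∧
      b * (conj (x 0) * x 1) = w := by
  have hp : 0 ≤ (1 + u) / 2 := by nlinarith
  have hq : 0 ≤ (1 - u) / 2 := by nlinarith
  set p := √((1 + u) / 2)
  set q := √((1 - u) / 2)
  have hp₂ : p ^ 2 = (1 + u) / 2 := Real.sq_sqrt hp
  have hq₂ : q ^ 2 = (1 - u) / 2 := Real.sq_sqrt hq
  have hnorm : ‖b‖ * (p * q) = ‖w‖ := by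
    refine (sq_eq_sq₀ (by positivity) (norm_nonneg w)).mp ?_
    rw [hw, mul_pow, mul_pow, hp₂, hq₂]
    ring
  -- `x 1` carries the phase that turns the phase of `b` into that of `w`
  set e := Complex.exp ((w.arg - b.arg : ℝ) * Complex.I)
  have he : Complex.exp (b.arg * Complex.I) * e = Complex.exp (w.arg * Complex.I) := by
    rw [← Complex.exp_add]; push_cast; ring_nf
  refine ⟨![p, q * e], ?_, ?_, ?_⟩
  · simp only [cons_val_zero, Complex.norm_real, Real.norm_eq_abs, sq_abs, hp₂]
  · simp only [cons_val_one, cons_val_zero, norm_mul, Complex.norm_real, Real.norm_eq_abs,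
      e, Complex.norm_exp_ofReal_mul_I, mul_one, sq_abs, hq₂]
  · calc b * (conj (p : ℂ) * (q * e))
        = ((‖b‖ * (p * q) : ℝ) : ℂ) * (Complex.exp (b.arg * Complex.I) * e) := by
          nth_rw 1 [← Complex.norm_mul_exp_arg_mul_I b]
          rw [Complex.conj_ofReal]; push_cast; ring
      _ = w := by rw [hnorm, he, Complex.norm_mul_exp_arg_mul_I]

noncomputable def ellipseDiscr (a z : ℂ) (α β : ℝ) : ℝ :=
  α ^ 2 * β ^ 2 + (conj a * z).re ^ 2 - α ^ 2 * ‖z‖ ^ 2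

section Ellipse

variable {a z : ℂ} {α β : ℝ}

lemma sq_mul_norm_sub_ofReal_mul_sq (hα : α ^ 2 = ‖a‖ ^ 2 + β ^ 2) (u : ℝ) :
    α ^ 2 * (‖z - u * a‖ ^ 2 - β ^ 2 * (1 - u ^ 2))
      = (α ^ 2 * u - (conj a * z).re) ^ 2 - ellipseDiscr a z α β := by
  simp only [ellipseDiscr, Complex.sq_norm, Complex.normSq_apply] at hα ⊢
  simp only [Complex.sub_re, Complex.sub_im, Complex.mul_re, Complex.mul_im, Complex.ofReal_re,
    Complex.ofReal_im, Complex.conj_re, Complex.conj_im]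
  linear_combination (-α ^ 2 * u ^ 2) * hα

lemma sq_mul_norm_sub_sq (hα : α ^ 2 = ‖a‖ ^ 2 + β ^ 2) :
    α ^ 2 * ‖z - a‖ ^ 2 = (α ^ 2 - (conj a * z).re) ^ 2 - ellipseDiscr a z α β := by
  simpa using sq_mul_norm_sub_ofReal_mul_sq (z := z) hα 1

lemma sq_mul_norm_add_sq (hα : α ^ 2 = ‖a‖ ^ 2 + β ^ 2) :
    α ^ 2 * ‖z + a‖ ^ 2 = (α ^ 2 + (conj a * z).re) ^ 2 - ellipseDiscr a z α β := by
  have h := sq_mul_norm_sub_ofReal_mul_sq (z := z) hα (-1)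
  simp only [Complex.ofReal_neg, Complex.ofReal_one, neg_one_mul, sub_neg_eq_add, neg_one_sq,
    sub_self, mul_zero, sub_zero] at h
  linear_combination h

lemma abs_re_conj_mul_le (hα : α ^ 2 = ‖a‖ ^ 2 + β ^ 2) (hα₀ : 0 ≤ α) (hz : ‖z‖ ≤ α) :
    |(conj a * z).re| ≤ α ^ 2 := by
  have ha : ‖a‖ ≤ α :=
    le_of_pow_le_pow_left₀ two_ne_zero hα₀ (by nlinarith [sq_nonneg β])
  calc |(conj a * z).re| ≤ ‖conj a * z‖ := Complex.abs_re_le_norm _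
    _ = ‖a‖ * ‖z‖ := by rw [norm_mul, Complex.norm_conj]
    _ ≤ α * α := mul_le_mul ha hz (norm_nonneg z) hα₀
    _ = α ^ 2 := (sq α).symm

lemma norm_sub_add_norm_add_le_iff (hα : α ^ 2 = ‖a‖ ^ 2 + β ^ 2) (hα₀ : 0 < α) :
    ‖z - a‖ + ‖z + a‖ ≤ 2 * α ↔ 0 ≤ ellipseDiscr a z α β ∧ |(conj a * z).re| ≤ α ^ 2 := by
  have h₁ := sq_mul_norm_sub_sq (z := z) hα
  have h₂ := sq_mul_norm_add_sq (z := z) hα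
  rw [← mul_pow] at h₁ h₂
  constructor
  · intro h
    refine ⟨?_, abs_re_conj_mul_le hα hα₀.le ?_⟩
    · by_contra! hD
      have d₁ : α ^ 2 - (conj a * z).re < α * ‖z - a‖ :=
        lt_of_pow_lt_pow_left₀ 2 (by positivity) (by linarith)
      have d₂ : α ^ 2 + (conj a * z).re < α * ‖z + a‖ :=
        lt_of_pow_lt_pow_left₀ 2 (by positivity) (by linarith)
      nlinarith
    · have := norm_add_le (z - a) (z + a)
      rw [show z - a + (z + a) = 2 * z by ring, norm_mul, Complex.norm_two] at this
      linarith
  · rintro ⟨hD, hR⟩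
    rw [abs_le] at hR
    have d₁ : α * ‖z - a‖ ≤ α ^ 2 - (conj a * z).re :=
      le_of_pow_le_pow_left₀ two_ne_zero (by linarith) (by linarith)
    have d₂ : α * ‖z + a‖ ≤ α ^ 2 + (conj a * z).re :=
      le_of_pow_le_pow_left₀ two_ne_zero (by linarith) (by linarith)
    nlinarith

lemma abs_re_conj_mul_le_of_norm_sub_ofReal_mul_sq (hα : α ^ 2 = ‖a‖ ^ 2 + β ^ 2) {u : ℝ}
    (hu : u ^ 2 ≤ 1) (hw : ‖z - u * a‖ ^ 2 = β ^ 2 * (1 - u ^ 2)) :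
    |(conj a * z).re| ≤ α ^ 2 := by
  -- `Re(ā z) - u‖a‖² = Re(ā (z - u a))` is at most `‖a‖ β √(1 - u²)` in absolute value,
  -- and `(‖a‖²(1 ∓ u) + β²)² - ‖a‖² β² (1 - u²) = (‖a‖⁴ + ‖a‖² β²)(1 ∓ u)² + β⁴ ≥ 0`
  have hp : ((conj a * z).re - u * ‖a‖ ^ 2) ^ 2 ≤ ‖a‖ ^ 2 * (β ^ 2 * (1 - u ^ 2)) := by
    have h := Complex.abs_re_le_norm (conj a * (z - u * a))
    have e : (conj a * (z - u * a)).re = (conj a * z).re - u * ‖a‖ ^ 2 := by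
      rw [mul_sub, Complex.sub_re, Complex.sq_norm, Complex.normSq_apply]
      simp only [Complex.mul_re, Complex.mul_im, Complex.conj_re, Complex.conj_im,
        Complex.ofReal_re, Complex.ofReal_im]
      ring
    rw [e, norm_mul, Complex.norm_conj] at h
    rw [← hw, ← mul_pow]
    exact sq_le_sq' (abs_le.mp h).1 (abs_le.mp h).2
  have hu₁ : u ≤ 1 := by nlinarith
  have hu₂ : -1 ≤ u := by nlinarith
  have hM₁ := abs_le_of_sq_le_sq' (b := ‖a‖ ^ 2 * (1 - u) + β ^ 2) (hp.trans (by
    nlinarith [sq_nonneg (‖a‖ ^ 2 * (1 - u)), sq_nonneg (β * (1 - u)), sq_nonneg β,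
      mul_nonneg (sq_nonneg ‖a‖) (sq_nonneg (β * (1 - u)))]))
    (add_nonneg (mul_nonneg (sq_nonneg _) (by linarith)) (sq_nonneg _))
  have hM₂ := abs_le_of_sq_le_sq' (b := ‖a‖ ^ 2 * (1 + u) + β ^ 2) (hp.trans (by
    nlinarith [sq_nonneg (‖a‖ ^ 2 * (1 + u)), sq_nonneg (β * (1 + u)), sq_nonneg β,
      mul_nonneg (sq_nonneg ‖a‖) (sq_nonneg (β * (1 + u)))]))
    (add_nonneg (mul_nonneg (sq_nonneg _) (by linarith)) (sq_nonneg _))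
  rw [abs_le]
  constructor <;> linarith [hM₁.1, hM₂.1, hM₁.2, hM₂.2]

lemma exists_norm_sub_ofReal_mul_sq_iff (hα : α ^ 2 = ‖a‖ ^ 2 + β ^ 2) (hα₀ : 0 < α) :
    (∃ u : ℝ, u ^ 2 ≤ 1 ∧ ‖z - u * a‖ ^ 2 = β ^ 2 * (1 - u ^ 2)) ↔
      0 ≤ ellipseDiscr a z α β ∧ |(conj a * z).re| ≤ α ^ 2 := by
  constructor
  · rintro ⟨u, hu, hw⟩
    have hD := sq_mul_norm_sub_ofReal_mul_sq (z := z) hα u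
    rw [hw, sub_self, mul_zero] at hD
    exact ⟨by nlinarith, abs_re_conj_mul_le_of_norm_sub_ofReal_mul_sq hα hu hw⟩
  · rintro ⟨hD, hR⟩
    rw [abs_le] at hR
    set s := √(ellipseDiscr a z α β)
    have hs : s ^ 2 = ellipseDiscr a z α β := Real.sq_sqrt hD
    have hs_le : s ≤ α ^ 2 - (conj a * z).re := by
      refine (Real.sqrt_le_left (by linarith)).mpr ?_
      nlinarith [sq_mul_norm_sub_sq (z := z) hα, sq_nonneg (α * ‖z - a‖)]
    refine ⟨(s + (conj a * z).re) / α ^ 2, ?_, ?_⟩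
    · rw [div_pow, div_le_one (by positivity)]
      exact sq_le_sq' (by linarith [Real.sqrt_nonneg (ellipseDiscr a z α β)]) (by linarith)
    · have h := sq_mul_norm_sub_ofReal_mul_sq (z := z) hα ((s + (conj a * z).re) / α ^ 2)
      rw [mul_div_cancel₀ _ (by positivity), add_sub_cancel_right, hs, sub_self] at h
      exact sub_eq_zero.mp ((mul_eq_zero.mp h).resolve_left (by positivity))

end Ellipse

lemma exists_norm_sub_ofReal_mul_sq_iff_norm_sub_add_norm_add_le (a z : ℂ) (β : ℝ) :
    (∃ u : ℝ, u ^ 2 ≤ 1 ∧ ‖z - u * a‖ ^ 2 = β ^ 2 * (1 - u ^ 2)) ↔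
      ‖z - a‖ + ‖z + a‖ ≤ 2 * √(‖a‖ ^ 2 + β ^ 2) := by
  have hα : √(‖a‖ ^ 2 + β ^ 2) ^ 2 = ‖a‖ ^ 2 + β ^ 2 := Real.sq_sqrt (by positivity)
  rcases (Real.sqrt_nonneg (‖a‖ ^ 2 + β ^ 2)).eq_or_lt with h₀ | h₀
  · have ha : a = 0 := norm_eq_zero.mp (by nlinarith [norm_nonneg a, sq_nonneg β])
    have hβ : β ^ 2 = 0 := by nlinarith [norm_nonneg a, sq_nonneg β]
    subst ha
    rw [← h₀, mul_zero]
    simp only [hβ, zero_mul, mul_zero, sub_zero, add_zero, sq_eq_zero_iff, norm_eq_zero]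
    constructor
    · rintro ⟨_, _, rfl⟩; simp
    · intro h
      exact ⟨0, by norm_num, norm_eq_zero.mp (by linarith [norm_nonneg z])⟩
  · exact (exists_norm_sub_ofReal_mul_sq_iff hα h₀).trans
      (norm_sub_add_norm_add_le_iff hα h₀).symm

lemma mem_numRange_upperTriangular_iff (l₁ b l₂ z : ℂ) :
    z ∈ numRange !![l₁, b; 0, l₂] ↔ ∃ u : ℝ, u ^ 2 ≤ 1 ∧
      ‖z - (l₁ + l₂) / 2 - u * ((l₁ - l₂) / 2)‖ ^ 2 = (‖b‖ / 2) ^ 2 * (1 - u ^ 2) := by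
  rw [numRange_eq_setOf_dotProduct]
  simp only [Set.mem_ofPred_eq, star_dotProduct_upperTriangular_mulVec,
    star_dotProduct_self_fin_two]
  constructor
  · rintro ⟨x, hx, rfl⟩
    have hx' : ‖x 0‖ ^ 2 + ‖x 1‖ ^ 2 = 1 := by exact_mod_cast hx
    refine ⟨‖x 0‖ ^ 2 - ‖x 1‖ ^ 2, by nlinarith [sq_nonneg (‖x 0‖ * ‖x 1‖)], ?_⟩
    have hw : l₁ * ‖x 0‖ ^ 2 + l₂ * ‖x 1‖ ^ 2 + b * (conj (x 0) * x 1) - (l₁ + l₂) / 2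
        - (‖x 0‖ ^ 2 - ‖x 1‖ ^ 2 : ℝ) * ((l₁ - l₂) / 2) = b * (conj (x 0) * x 1) := by
      push_cast
      linear_combination (l₁ + l₂) / 2 * hx
    rw [hw, norm_mul, norm_mul, Complex.norm_conj]
    linear_combination (‖b‖ ^ 2 / 4 * (‖x 0‖ ^ 2 + ‖x 1‖ ^ 2 + 1)) * hx'
  · rintro ⟨u, hu, hw⟩
    obtain ⟨x, h₀, h₁, hb⟩ := exists_norm_sq_eq_and_mul_conj_mul_eq b _ hu hw
    have h₀' : (‖x 0‖ : ℂ) ^ 2 = (1 + u) / 2 := by exact_mod_cast h₀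
    have h₁' : (‖x 1‖ : ℂ) ^ 2 = (1 - u) / 2 := by exact_mod_cast h₁
    refine ⟨x, by rw [h₀', h₁']; ring, ?_⟩
    rw [h₀', h₁', hb]
    ring

lemma numRange_upperTriangular (l₁ b l₂ : ℂ) :
    numRange !![l₁, b; 0, l₂] = {z | ‖z - l₁‖ + ‖z - l₂‖ ≤ √(‖b‖ ^ 2 + ‖l₁ - l₂‖ ^ 2)} := by
  ext z
  have e₁ : z - (l₁ + l₂) / 2 - (l₁ - l₂) / 2 = z - l₁ := by ring
  have e₂ : z - (l₁ + l₂) / 2 + (l₁ - l₂) / 2 = z - l₂ := by ring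
  have e₃ : ‖b‖ ^ 2 + ‖l₁ - l₂‖ ^ 2 = 2 ^ 2 * (‖(l₁ - l₂) / 2‖ ^ 2 + (‖b‖ / 2) ^ 2) := by
    rw [norm_div, Complex.norm_two]; ring
  rw [mem_numRange_upperTriangular_iff,
    exists_norm_sub_ofReal_mul_sq_iff_norm_sub_add_norm_add_le, e₁, e₂, e₃,
    Real.sqrt_mul (by norm_num), Real.sqrt_sq (by norm_num)]
  rfl

/-- The elliptical range theorem: the numerical range of a `2 × 2` matrix `A` with
eigenvalues `λ₁, λ₂` is the closed elliptical disk with foci `λ₁, λ₂` and minor axis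
of length `√(tr(AᴴA) − |λ₁|² − |λ₂|²)` (equivalently, major axis of length
`√(minor² + |λ₁ − λ₂|²)`), possibly degenerate. -/
theorem stmt_11 (A : Matrix (Fin 2) (Fin 2) ℂ) (lam₁ lam₂ : ℂ)
    (htr : lam₁ + lam₂ = Matrix.trace A) (hdet : lam₁ * lam₂ = Matrix.det A)
    (m : ℝ)
    (hm : m = Real.sqrt ((Matrix.trace (Aᴴ * A)).re
      - ‖lam₁‖ ^ 2 - ‖lam₂‖ ^ 2)) :
    numRange A = {z : ℂ | ‖z - lam₁‖ + ‖z - lam₂‖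
      ≤ Real.sqrt (m ^ 2 + ‖lam₁ - lam₂‖ ^ 2)} := by
  obtain ⟨U, hU, b, rfl⟩ := exists_unitary_conj_upperTriangular A lam₁ lam₂ htr hdet
  have hmb : m = ‖b‖ := by
    rw [hm, trace_conjTranspose_mul_self_unitary_conj hU,
      re_trace_conjTranspose_mul_self_upperTriangular,
      show ‖lam₁‖ ^ 2 + ‖b‖ ^ 2 + ‖lam₂‖ ^ 2 - ‖lam₁‖ ^ 2 - ‖lam₂‖ ^ 2 = ‖b‖ ^ 2 by ring,
      Real.sqrt_sq (norm_nonneg b)]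
  rw [numRange_unitary_conj hU, numRange_upperTriangular, hmb]
end

section
/- Fix a, b, c ∈ ℂ with a ≠ b, and d > 0, and let S_d = [[a, d], [cd, b]]. Then W(S_d) degenerates to a line segment if and only if c = (a−b)²/|a−b|². In that case W(S_d) is the closed segment with endpoints (a + b ± (a−b)√(1 + 4d²/|a−b|²))/2. -/
/-!
Put `v = a - b` and `u = v / |v|`. The condition `c = v² / |v|²` says `c = u²`, and then
`S_d = (a + b) / 2 + u • H` with `H = [[|v|/2, d ū], [d u, -|v|/2]]` Hermitian, so `W(S_d)` is
the image of `W(H)` under `z ↦ (a + b) / 2 + u z`. For a traceless Hermitian `[[p, q], [q̄, -p]]`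
the quadratic form is the real number `p (|x|² - |y|²) + 2 Re (x̄ q y)`; Cauchy–Schwarz bounds it
by `r = √(p² + |q|²)`, and at `x = cos θ`, `y = e^{-i arg q} sin θ` it equals
`r cos (2θ - arg (p + i |q|))`, so it sweeps out `[-r, r]`.

Conversely, if `W(S_d)` lies on a line, its values at `e₀`, `e₁`, `(e₀ + e₁)/√2` and
`(e₀ + i e₁)/√2`, namely `a`, `b`, `(a + b + d + cd)/2` and `(a + b + i (d - cd))/2`, are
collinear. Hence `d + cd` and `i (d - cd)` are real multiples of `a - b`, which forces
`c · conj (a - b) = a - b`.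
-/

open ComplexConjugate Complex

lemma segment_ofReal (a b : ℝ) : segment ℝ (a : ℂ) b = ofReal '' segment ℝ a b :=
  (image_segment ℝ ofRealCLM.toLinearMap.toAffineMap a b).symm

lemma image_segment_add_mul (β u z w : ℂ) :
    (fun t => β + u * t) '' segment ℝ z w = segment ℝ (β + u * z) (β + u * w) :=
  image_segment ℝ ⟨fun t => β + u * t, LinearMap.mulLeft ℝ u, fun _ _ => by
    simp only [vadd_eq_add, LinearMap.mulLeft_apply]; ring⟩ z w

lemma exists_sub_eq_real_mul_of_mem_segment {z w p₀ p₁ p : ℂ} (h₀ : p₀ ∈ segment ℝ z w)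
    (h₁ : p₁ ∈ segment ℝ z w) (h : p ∈ segment ℝ z w) (hne : p₀ ≠ p₁) :
    ∃ t : ℝ, p - p₁ = t * (p₀ - p₁) := by
  rw [segment_eq_image'] at h₀ h₁ h
  obtain ⟨s₀, -, rfl⟩ := h₀
  obtain ⟨s₁, -, rfl⟩ := h₁
  obtain ⟨s, -, rfl⟩ := h
  have hs : (s₀ : ℂ) - s₁ ≠ 0 := by
    rw [sub_ne_zero, Ne, ofReal_inj]
    rintro rfl
    exact hne rfl
  refine ⟨(s - s₁) / (s₀ - s₁), ?_⟩
  simp only [real_smul]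
  push_cast
  field_simp
  ring

lemma mem_numRange_iff {M : Matrix (Fin 2) (Fin 2) ℂ} {z : ℂ} :
    z ∈ numRange M ↔ ∃ x y : ℂ, normSq x + normSq y = 1 ∧
      z = conj x * (M 0 0 * x + M 0 1 * y) + conj y * (M 1 0 * x + M 1 1 * y) := by
  have hnorm (x : EuclideanSpace ℂ (Fin 2)) : ‖x‖ = 1 ↔ normSq (x 0) + normSq (x 1) = 1 := by
    rw [EuclideanSpace.norm_eq, Real.sqrt_eq_one, Fin.sum_univ_two, ← normSq_eq_norm_sq,
      ← normSq_eq_norm_sq]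
  constructor
  · rintro ⟨x, hx, rfl⟩
    refine ⟨x 0, x 1, (hnorm x).1 hx, ?_⟩
    simp [PiLp.inner_apply, Fin.sum_univ_two, mul_comm]
  · rintro ⟨x, y, hxy, rfl⟩
    refine ⟨!₂[x, y], (hnorm _).2 hxy, ?_⟩
    simp [PiLp.inner_apply, Fin.sum_univ_two, mul_comm]

lemma conj_mul_self_add_conj_mul_self {x y : ℂ} (h : normSq x + normSq y = 1) :
    conj x * x + conj y * y = 1 := by
  rw [← normSq_eq_conj_mul_self, ← normSq_eq_conj_mul_self]
  exact_mod_cast h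

lemma numRange_scalar_add_smul (β u : ℂ) (M : Matrix (Fin 2) (Fin 2) ℂ) :
    numRange (Matrix.scalar (Fin 2) β + u • M) = (fun z => β + u * z) '' numRange M := by
  ext z
  simp only [Set.mem_image, mem_numRange_iff]
  constructor
  · rintro ⟨x, y, hxy, rfl⟩
    refine ⟨_, ⟨x, y, hxy, rfl⟩, ?_⟩
    simp only [Matrix.add_apply, Matrix.smul_apply, smul_eq_mul, Matrix.scalar_apply,
      Matrix.diagonal_apply_eq, Matrix.diagonal_apply_ne _ zero_ne_one,
      Matrix.diagonal_apply_ne _ one_ne_zero, zero_add]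
    linear_combination -β * conj_mul_self_add_conj_mul_self hxy
  · rintro ⟨_, ⟨x, y, hxy, rfl⟩, rfl⟩
    refine ⟨x, y, hxy, ?_⟩
    simp only [Matrix.add_apply, Matrix.smul_apply, smul_eq_mul, Matrix.scalar_apply,
      Matrix.diagonal_apply_eq, Matrix.diagonal_apply_ne _ zero_ne_one,
      Matrix.diagonal_apply_ne _ one_ne_zero, zero_add]
    linear_combination -β * conj_mul_self_add_conj_mul_self hxy

noncomputable def hermForm (p : ℝ) (q x y : ℂ) : ℝ :=
  p * (normSq x - normSq y) + 2 * (conj x * q * y).re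

lemma conj_mul_add_conj_mul_eq_hermForm (p : ℝ) (q x y : ℂ) :
    conj x * (p * x + q * y) + conj y * (conj q * x + -p * y) = hermForm p q x y := by
  have h := add_conj (conj x * q * y)
  simp only [map_mul, conj_conj] at h
  push_cast [hermForm] at h ⊢
  rw [← h, normSq_eq_conj_mul_self, normSq_eq_conj_mul_self]
  ring

lemma hermForm_sq_le (p : ℝ) (q x y : ℂ) :
    hermForm p q x y ^ 2 ≤ (p ^ 2 + ‖q‖ ^ 2) * (normSq x + normSq y) ^ 2 := by
  set w := conj x * y
  have hw : w.re ^ 2 + w.im ^ 2 = normSq x * normSq y := by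
    rw [sq, sq, ← normSq_apply, normSq_mul, normSq_conj]
  have hre : (conj x * q * y).re = q.re * w.re - q.im * w.im := by
    simp only [w, mul_comm (conj x) q, mul_assoc, mul_re]
  rw [hermForm, hre, ← normSq_eq_norm_sq, normSq_apply q]
  nlinarith [sq_nonneg (p * (2 * w.re) - q.re * (normSq x - normSq y)),
    sq_nonneg (p * (2 * w.im) + q.im * (normSq x - normSq y)),
    sq_nonneg (q.re * w.im + q.im * w.re)]

lemma exists_hermForm_eq (p : ℝ) (q : ℂ) {τ : ℝ} (hτ : |τ| ≤ √(p ^ 2 + ‖q‖ ^ 2)) :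
    ∃ x y : ℂ, normSq x + normSq y = 1 ∧ hermForm p q x y = τ := by
  set r := √(p ^ 2 + ‖q‖ ^ 2)
  set φ := arg ⟨p, ‖q‖⟩
  have hr : ‖(⟨p, ‖q‖⟩ : ℂ)‖ = r := by
    rw [norm_def, normSq_mk, ← sq, ← sq]
  have hcos : r * Real.cos φ = p := by rw [← hr]; exact norm_mul_cos_arg _
  have hsin : r * Real.sin φ = ‖q‖ := by rw [← hr]; exact norm_mul_sin_arg _
  have hτr : r * Real.cos (Real.arccos (τ / r)) = τ := by
    rcases (Real.sqrt_nonneg _).eq_or_lt with h0 | hpos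
    · have : τ = 0 := abs_nonpos_iff.1 (h0 ▸ hτ)
      simp [this]
    · rw [Real.cos_arccos, mul_div_cancel₀ _ hpos.ne']
      · rw [le_div_iff₀ hpos]; linarith [neg_abs_le τ]
      · rw [div_le_iff₀ hpos]; linarith [le_abs_self τ]
  set w := exp (↑(-arg q) * I)
  have hw : normSq w = 1 := by
    rw [normSq_eq_norm_sq, norm_exp_ofReal_mul_I, one_pow]
  have hqw : q * w = ‖q‖ := by
    nth_rewrite 1 [← norm_mul_exp_arg_mul_I q]
    rw [mul_assoc, ← exp_add, ofReal_neg, neg_mul, add_neg_cancel, exp_zero, mul_one]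
  set θ := (φ + Real.arccos (τ / r)) / 2
  refine ⟨Real.cos θ, w * Real.sin θ, ?_, ?_⟩
  · rw [normSq_mul, normSq_ofReal, normSq_ofReal, hw, one_mul, ← sq, ← sq, Real.cos_sq_add_sin_sq]
  · have hre : (conj (Real.cos θ : ℂ) * q * (w * Real.sin θ)).re =
        ‖q‖ * (Real.cos θ * Real.sin θ) := by
      rw [conj_ofReal, show (Real.cos θ : ℂ) * q * (w * Real.sin θ) =
        q * w * (Real.cos θ * Real.sin θ) by ring, hqw]
      norm_cast
    rw [hermForm, normSq_mul, normSq_ofReal, normSq_ofReal, hw, one_mul, hre, ← hτr, ← hcos,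
      ← hsin, show Real.arccos (τ / r) = 2 * θ - φ by ring, Real.cos_sub, Real.cos_two_mul,
      Real.sin_two_mul]
    linear_combination -(r * Real.cos φ) * Real.sin_sq_add_cos_sq θ

lemma numRange_hermitian (p : ℝ) (q : ℂ) :
    numRange !![(p : ℂ), q; conj q, -p] =
      segment ℝ (↑(-√(p ^ 2 + ‖q‖ ^ 2))) (↑(√(p ^ 2 + ‖q‖ ^ 2))) := by
  ext z
  rw [segment_ofReal, segment_eq_Icc (neg_le_self (Real.sqrt_nonneg _)), mem_numRange_iff]
  constructor
  · rintro ⟨x, y, hxy, rfl⟩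
    simp only [Matrix.of_apply, Matrix.cons_val', Matrix.cons_val_zero, Matrix.cons_val_one,
      Matrix.empty_val', Matrix.cons_val_fin_one, conj_mul_add_conj_mul_eq_hermForm]
    refine ⟨_, abs_le.1 (Real.abs_le_sqrt ?_), rfl⟩
    simpa [hxy] using hermForm_sq_le p q x y
  · rintro ⟨τ, hτ, rfl⟩
    obtain ⟨x, y, hxy, hτ⟩ := exists_hermForm_eq p q (abs_le.2 hτ)
    refine ⟨x, y, hxy, ?_⟩
    simp only [Matrix.of_apply, Matrix.cons_val', Matrix.cons_val_zero, Matrix.cons_val_one,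
      Matrix.empty_val', Matrix.cons_val_fin_one, conj_mul_add_conj_mul_eq_hermForm, hτ]

lemma conj_mul_eq_of_numRange_subset_segment {M : Matrix (Fin 2) (Fin 2) ℂ} {z w : ℂ}
    (h : numRange M ⊆ segment ℝ z w) (hM : M 0 0 ≠ M 1 1) :
    M 1 0 * conj (M 0 0 - M 1 1) = conj (M 0 1) * (M 0 0 - M 1 1) := by
  have hmem (x y : ℂ) (hxy : normSq x + normSq y = 1) :
      conj x * (M 0 0 * x + M 0 1 * y) + conj y * (M 1 0 * x + M 1 1 * y) ∈ segment ℝ z w :=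
    h (mem_numRange_iff.2 ⟨x, y, hxy, rfl⟩)
  set σ := √(1 / 2 : ℝ)
  have hσ : σ * σ = 1 / 2 := Real.mul_self_sqrt (by norm_num)
  have hσC : (σ : ℂ) * σ = 1 / 2 := by rw [← ofReal_mul, hσ]; norm_num
  have h₀ := hmem 1 0 (by simp)
  have h₁ := hmem 0 1 (by simp)
  have hP := hmem σ σ (by simp only [normSq_ofReal, hσ]; norm_num)
  have hQ := hmem σ (σ * I)
    (by simp only [normSq_mul, normSq_ofReal, normSq_I, mul_one, hσ]; norm_num)
  simp only [map_one, map_zero, one_mul, zero_mul, mul_one, mul_zero, add_zero, zero_add]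
    at h₀ h₁
  obtain ⟨t₁, ht₁⟩ := exists_sub_eq_real_mul_of_mem_segment h₀ h₁ hP hM
  obtain ⟨t₂, ht₂⟩ := exists_sub_eq_real_mul_of_mem_segment h₀ h₁ hQ hM
  simp only [conj_ofReal, map_mul, conj_I] at ht₁ ht₂
  have e₁ : M 0 1 + M 1 0 = (2 * t₁ - 1) * (M 0 0 - M 1 1) := by
    linear_combination 2 * ht₁ - (2 * (M 0 0 + M 0 1 + M 1 0 + M 1 1)) * hσC
  have e₂ : I * (M 0 1 - M 1 0) = (2 * t₂ - 1) * (M 0 0 - M 1 1) := by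
    linear_combination 2 * ht₂ - (2 * (M 0 0 + I * M 0 1 - I * M 1 0 - I ^ 2 * M 1 1)) * hσC
      + M 1 1 * I_sq
  have hx : M 0 1 = (2 * t₁ - 1 - (2 * t₂ - 1) * I) * (M 0 0 - M 1 1) / 2 := by
    linear_combination e₁ / 2 - I * e₂ / 2 + (M 0 1 - M 1 0) / 2 * I_sq
  have hy : M 1 0 = (2 * t₁ - 1 + (2 * t₂ - 1) * I) * (M 0 0 - M 1 1) / 2 := by
    linear_combination e₁ / 2 + I * e₂ / 2 - (M 0 1 - M 1 0) / 2 * I_sq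
  rw [hy, hx]
  simp only [map_mul, map_div₀, map_sub, map_ofNat, map_one, conj_ofReal, conj_I]
  ring

lemma numRange_eq_segment (a b c : ℂ) (hab : a ≠ b) (d : ℝ)
    (hc : c = (a - b) ^ 2 / ((‖a - b‖ : ℂ) ^ 2)) :
    numRange !![a, (d : ℂ); c * d, b] =
      segment ℝ
        ((a + b + (a - b) * Real.sqrt (1 + 4 * d ^ 2 / ‖a - b‖ ^ 2)) / 2)
        ((a + b - (a - b) * Real.sqrt (1 + 4 * d ^ 2 / ‖a - b‖ ^ 2)) / 2) := by
  set v := a - b with hv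
  set m := ‖v‖
  set R := √(1 + 4 * d ^ 2 / m ^ 2)
  have hm : 0 < m := norm_pos_iff.2 (sub_ne_zero.2 hab)
  have hmC : (m : ℂ) ≠ 0 := by exact_mod_cast hm.ne'
  obtain ⟨u, hu, hum⟩ : ∃ u : ℂ, ‖u‖ = 1 ∧ u * m = v :=
    ⟨v / m, by simp [m, hm.ne'], div_mul_cancel₀ v hmC⟩
  have huc : u * conj u = 1 := by rw [mul_conj', hu, ofReal_one, one_pow]
  have hcu : c = u ^ 2 := by rw [hc, ← hum]; field_simp
  have hS : !![a, (d : ℂ); c * d, b] = Matrix.scalar (Fin 2) ((a + b) / 2) +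
      u • !![((m / 2 : ℝ) : ℂ), d * conj u; conj (d * conj u), -((m / 2 : ℝ) : ℂ)] := by
    ext i j
    fin_cases i <;> fin_cases j <;>
      simp only [Fin.zero_eta, Fin.mk_one, Fin.isValue, Matrix.add_apply, Matrix.smul_apply,
        Matrix.scalar_apply, Matrix.diagonal_apply, Matrix.of_apply, Matrix.cons_val',
        Matrix.cons_val_zero, Matrix.cons_val_one, Matrix.cons_val_fin_one, Matrix.empty_val',
        smul_eq_mul, map_mul, conj_ofReal, conj_conj, if_true, zero_ne_one, one_ne_zero, if_false,
        zero_add, ofReal_div, ofReal_ofNat]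
    · linear_combination -hum / 2 - hv / 2
    · linear_combination -(d : ℂ) * huc
    · linear_combination (d : ℂ) * hcu
    · linear_combination hum / 2 + hv / 2
  have hr : √((m / 2) ^ 2 + ‖(d : ℂ) * conj u‖ ^ 2) = m / 2 * R := by
    rw [norm_mul, norm_conj, hu, mul_one, norm_real, Real.norm_eq_abs, sq_abs,
      show (m / 2) ^ 2 + d ^ 2 = (m / 2) ^ 2 * (1 + 4 * d ^ 2 / m ^ 2) by field_simp; ring,
      Real.sqrt_mul (sq_nonneg _), Real.sqrt_sq (by positivity)]
  rw [hS, numRange_scalar_add_smul, numRange_hermitian, hr, image_segment_add_mul, segment_symm]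
  congr 1
  · push_cast; linear_combination (R : ℂ) / 2 * hum
  · push_cast; linear_combination -(R : ℂ) / 2 * hum

/-- For `a ≠ b` and `d > 0`, `W(S_d)` degenerates to a line segment iff
`c = (a−b)²/|a−b|²`, in which case it is the closed segment with endpoints
`(a + b ± (a−b)√(1 + 4d²/|a−b|²))/2`. -/
theorem stmt_14 (a b c : ℂ) (hab : a ≠ b) (d : ℝ) (hd : 0 < d) :
    ((∃ z w : ℂ, numRange !![a, (d : ℂ); c * d, b] = segment ℝ z w) ↔
      c = (a - b) ^ 2 / ((‖a - b‖ : ℂ) ^ 2)) ∧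
    (c = (a - b) ^ 2 / ((‖a - b‖ : ℂ) ^ 2) →
      numRange !![a, (d : ℂ); c * d, b] =
        segment ℝ
          ((a + b + (a - b) * Real.sqrt (1 + 4 * d ^ 2 / ‖a - b‖ ^ 2)) / 2)
          ((a + b - (a - b) * Real.sqrt (1 + 4 * d ^ 2 / ‖a - b‖ ^ 2)) / 2)) := by
  refine ⟨⟨fun ⟨z, w, h⟩ => ?_, fun hc => ⟨_, _, numRange_eq_segment a b c hab d hc⟩⟩,
    numRange_eq_segment a b c hab d⟩
  have hv : a - b ≠ 0 := sub_ne_zero.2 hab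
  have hline := conj_mul_eq_of_numRange_subset_segment h.subset (by simpa using hab)
  simp only [Matrix.of_apply, Matrix.cons_val', Matrix.cons_val_zero, Matrix.cons_val_one,
    Matrix.empty_val', Matrix.cons_val_fin_one, conj_ofReal] at hline
  have hc : c * conj (a - b) = a - b :=
    mul_left_cancel₀ (ofReal_ne_zero.2 hd.ne') (by linear_combination hline)
  rw [← mul_conj', eq_div_iff (mul_ne_zero hv ((map_ne_zero _).2 hv))]
  linear_combination (a - b) * hc
end

section
/- Fix a, b, c ∈ ℂ and d > 0 with S_d = [[a, d], [cd, b]], and suppose W(S_d) is a non-degenerate elliptical disk. Then a lies on the boundary of W(S_d) if and only if b lies on the boundary of W(S_d), and both occur if and only if |c| = 1. -/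
open Complex ComplexConjugate Filter Topology

noncomputable def mulAddMulConj (q r : ℂ) : ℂ →ₗ[ℝ] ℂ where
  toFun w := q * w + r * conj w
  map_add' w z := by simp only [map_add]; ring
  map_smul' t w := by simp only [real_smul, map_mul, conj_ofReal, RingHom.id_apply]; ring

@[simp]
theorem mulAddMulConj_apply (q r w : ℂ) : mulAddMulConj q r w = q * w + r * conj w := rfl

theorem mulAddMulConj_injective {q r : ℂ} (h : ‖q‖ ≠ ‖r‖) :
    Function.Injective (mulAddMulConj q r) := by
  refine (injective_iff_map_eq_zero _).2 fun w hw => ?_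
  have hnorm : ‖q‖ * ‖w‖ = ‖r‖ * ‖w‖ := by
    simpa using congrArg norm (eq_neg_of_add_eq_zero_left hw)
  by_contra hw0
  exact h (mul_right_cancel₀ (norm_ne_zero_iff.2 hw0) hnorm)

theorem exists_ne_zero_mulAddMulConj_eq_zero {q r : ℂ} (h : ‖q‖ = ‖r‖) :
    ∃ w ≠ 0, mulAddMulConj q r w = 0 := by
  by_cases hr : r = conj q
  · subst hr
    by_cases hq : q = 0
    · exact ⟨1, one_ne_zero, by simp [hq]⟩
    · exact ⟨I * conj q, by simp [hq], by simp; ring⟩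
  · refine ⟨r - conj q, sub_ne_zero.2 hr, ?_⟩
    have hnq := mul_conj' q
    rw [h] at hnq
    simp only [mulAddMulConj_apply, map_sub, conj_conj]
    linear_combination mul_conj' r - hnq

section

variable {p q r s : ℂ}

theorem mem_numRange_iff_s16 {z : ℂ} :
    z ∈ numRange !![p, q; r, s] ↔ ∃ u v : ℂ, ‖u‖ ^ 2 + ‖v‖ ^ 2 = 1 ∧
      z = conj u * (p * u + q * v) + conj v * (r * u + s * v) := by
  constructor
  · rintro ⟨x, hx, rfl⟩
    refine ⟨x 0, x 1, ?_, ?_⟩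
    · simpa [hx, Fin.sum_univ_two] using (EuclideanSpace.norm_sq_eq x).symm
    · simp [PiLp.inner_apply, Fin.sum_univ_two, Matrix.vecHead, Matrix.vecTail]
      ring
  · rintro ⟨u, v, huv, rfl⟩
    refine ⟨!₂[u, v], ?_, ?_⟩
    · rw [← sq_eq_sq₀ (norm_nonneg _) zero_le_one, EuclideanSpace.norm_sq_eq, Fin.sum_univ_two]
      simpa using huv
    · simp [PiLp.inner_apply, Fin.sum_univ_two]
      ring

theorem numRange_swap : numRange !![s, r; q, p] = numRange !![p, q; r, s] := by
  ext z
  simp only [mem_numRange_iff_s16]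
  constructor <;> rintro ⟨u, v, huv, rfl⟩ <;> exact ⟨v, u, by linarith, by ring⟩

theorem mem_numRange_self : p ∈ numRange !![p, q; r, s] :=
  mem_numRange_iff_s16.2 ⟨1, 0, by simp, by simp⟩

theorem exists_re_conj_mul_mem_uIcc_of_norm_eq (h : ‖q‖ = ‖r‖) :
    ∃ μ ≠ 0, ∀ z ∈ numRange !![p, q; r, s],
      (conj μ * z).re ∈ Set.uIcc (conj μ * p).re (conj μ * s).re := by
  -- `conj μ * r = -(μ * conj q)`, so `conj μ * (q t + r conj t)` is purely imaginary for all `t`.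
  obtain ⟨μ, hμ, hker⟩ := exists_ne_zero_mulAddMulConj_eq_zero (q := conj q) (r := r) (by simpa)
  refine ⟨μ, hμ, fun z hz => ?_⟩
  obtain ⟨u, v, huv, rfl⟩ := mem_numRange_iff_s16.1 hz
  have hsplit : conj μ * (conj u * (p * u + q * v) + conj v * (r * u + s * v)) =
      (‖u‖ ^ 2 : ℝ) * (conj μ * p) + (‖v‖ ^ 2 : ℝ) * (conj μ * s)
        + (conj μ * q * (conj u * v) - conj (conj μ * q * (conj u * v))) := by
    simp only [mulAddMulConj_apply] at hker
    simp only [map_mul, conj_conj]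
    push_cast
    linear_combination conj μ * p * mul_conj' u + conj μ * s * mul_conj' v + u * conj v * hker
  have hre : (conj μ * (conj u * (p * u + q * v) + conj v * (r * u + s * v))).re =
      ‖u‖ ^ 2 * (conj μ * p).re + ‖v‖ ^ 2 * (conj μ * s).re := by
    rw [hsplit, sub_conj, add_re, add_re, re_ofReal_mul, re_ofReal_mul]
    simp
  rw [hre, ← segment_eq_uIcc]
  exact ⟨_, _, sq_nonneg _, sq_nonneg _, huv, rfl⟩

theorem notMem_interior_numRange_of_norm_eq (h : ‖q‖ = ‖r‖) :
    p ∉ interior (numRange !![p, q; r, s]) := by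
  obtain ⟨μ, hμ, hstrip⟩ := exists_re_conj_mul_mem_uIcc_of_norm_eq (p := p) (s := s) h
  set φ : ℂ → ℝ := fun z => (conj μ * z).re
  have hφ : IsOpenMap φ :=
    isOpenMap_re.comp (Homeomorph.mulLeft₀ (conj μ) (by simpa using hμ)).isOpenMap
  have hsub : φ '' numRange !![p, q; r, s] ⊆ Set.uIcc (φ p) (φ s) := by
    rintro _ ⟨z, hz, rfl⟩
    exact hstrip z hz
  intro hp
  have hint : φ p ∈ interior (Set.uIcc (φ p) (φ s)) :=
    interior_mono hsub (hφ.image_interior_subset _ ⟨p, hp, rfl⟩)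
  rw [Set.uIcc, interior_Icc, Set.mem_Ioo, inf_lt_iff, lt_sup_iff] at hint
  grind

theorem mem_interior_numRange_of_norm_ne (h : ‖q‖ ≠ ‖r‖) :
    p ∈ interior (numRange !![p, q; r, s]) := by
  set L := (LinearEquiv.ofInjectiveEndo _ (mulAddMulConj_injective h)).toContinuousLinearEquiv
  set F : ℂ → ℂ := fun w => p + (‖w‖ ^ 2) • (s - p) + √(1 - ‖w‖ ^ 2) • mulAddMulConj q r w
  have hnormSq : HasStrictFDerivAt (fun w : ℂ => ‖w‖ ^ 2) (0 : ℂ →L[ℝ] ℝ) 0 := by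
    simpa using hasStrictFDerivAt_norm_sq (0 : ℂ)
  have hsqrt : HasStrictFDerivAt (fun w : ℂ => √(1 - ‖w‖ ^ 2)) (0 : ℂ →L[ℝ] ℝ) 0 := by
    simpa using ((hasStrictFDerivAt_const (1 : ℝ) (0 : ℂ)).sub hnormSq).sqrt (by simp)
  have hF : HasStrictFDerivAt F (L : ℂ →L[ℝ] ℂ) 0 := by
    refine (((hasStrictFDerivAt_const p 0).add (hnormSq.smul_const (s - p))).add
      (hsqrt.smul (L : ℂ →L[ℝ] ℂ).hasStrictFDerivAt)).congr_fderiv ?_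
    ext w
    simp
  have hchart : ∀ w ∈ Metric.closedBall (0 : ℂ) 1, F w ∈ numRange !![p, q; r, s] := by
    intro w hw
    have hw' : 0 ≤ 1 - ‖w‖ ^ 2 := by
      rw [mem_closedBall_zero_iff] at hw
      nlinarith [norm_nonneg w]
    have hu : (√(1 - ‖w‖ ^ 2) : ℂ) * √(1 - ‖w‖ ^ 2) = 1 - ‖w‖ ^ 2 := by
      rw [← ofReal_mul, Real.mul_self_sqrt hw']
      push_cast
      ring
    refine mem_numRange_iff_s16.2 ⟨√(1 - ‖w‖ ^ 2), w, ?_, ?_⟩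
    · rw [norm_real, Real.norm_eq_abs, sq_abs, Real.sq_sqrt hw']
      ring
    · simp only [F, mulAddMulConj_apply, conj_ofReal, real_smul]
      push_cast
      linear_combination (-p) * hu - s * mul_conj' w
  have hF0 : F 0 = p := by simp [F]
  have hnhds := hF.map_nhds_eq_of_equiv
  rw [hF0] at hnhds
  rw [mem_interior_iff_mem_nhds, ← hnhds]
  exact mem_map.2 (mem_of_superset (Metric.closedBall_mem_nhds 0 one_pos) hchart)

theorem mem_interior_numRange_iff :
    p ∈ interior (numRange !![p, q; r, s]) ↔ ‖q‖ ≠ ‖r‖ :=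
  ⟨fun hp h => notMem_interior_numRange_of_norm_eq h hp, mem_interior_numRange_of_norm_ne⟩

theorem mem_frontier_numRange_iff :
    p ∈ frontier (numRange !![p, q; r, s]) ↔ ‖q‖ = ‖r‖ := by
  rw [frontier, Set.mem_sdiff, and_iff_right (subset_closure mem_numRange_self),
    mem_interior_numRange_iff, not_not]

end

theorem stmt_16_general (a b c : ℂ) (d : ℝ) (hd : 0 < d) :
    (a ∈ frontier (numRange !![a, (d : ℂ); c * d, b]) ↔
      b ∈ frontier (numRange !![a, (d : ℂ); c * d, b])) ∧
    (a ∈ frontier (numRange !![a, (d : ℂ); c * d, b]) ↔ ‖c‖ = 1) := by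
  have hnorm : ‖c * d‖ = ‖(d : ℂ)‖ ↔ ‖c‖ = 1 := by
    rw [norm_mul, mul_eq_right₀ (by simpa using hd.ne')]
  have hb : b ∈ frontier (numRange !![a, (d : ℂ); c * d, b]) ↔ ‖c‖ = 1 := by
    rw [← numRange_swap, mem_frontier_numRange_iff, hnorm]
  have ha : a ∈ frontier (numRange !![a, (d : ℂ); c * d, b]) ↔ ‖c‖ = 1 := by
    rw [mem_frontier_numRange_iff, eq_comm, hnorm]
  exact ⟨ha.trans hb.symm, ha⟩

/-- If `W(S_d)` is a non-degenerate elliptical disk (i.e. has nonempty interior),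
then `a ∈ ∂W(S_d) ↔ b ∈ ∂W(S_d)`, and this occurs iff `|c| = 1`. -/
theorem stmt_16 (a b c : ℂ) (d : ℝ) (hd : 0 < d)
    (hnd : (interior (numRange !![a, (d : ℂ); c * d, b])).Nonempty) :
    (a ∈ frontier (numRange !![a, (d : ℂ); c * d, b]) ↔
      b ∈ frontier (numRange !![a, (d : ℂ); c * d, b])) ∧
    (a ∈ frontier (numRange !![a, (d : ℂ); c * d, b]) ↔ ‖c‖ = 1) :=
  stmt_16_general a b c d hd
end

section
/- Fix a, b, c ∈ ℂ and d > 0, let S_t = [[a, t], [ct, b]] for t > 0, and set E_d = ⋃_{t ∈ (0,d)} W(S_t). Then the closure of E_d equals W(S_d). Moreover, if |c| ≠ 1, then E_d = int(W(S_d)) and a, b ∈ int(W(S_d)). -/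
open Metric Set Complex ComplexConjugate WithLp
open scoped RealInnerProductSpace

theorem exists_norm_add_smul_lt {E : Type*} [NormedAddCommGroup E] [InnerProductSpace ℝ E]
    {p k : E} (h : ⟪p, k⟫ ≠ 0) : ∃ μ : ℝ, ‖p + μ • k‖ < ‖p‖ := by
  have hk : k ≠ 0 := by rintro rfl; simp at h
  -- `p + μ • k` is the orthogonal projection of `p` onto `kᗮ`
  refine ⟨-(⟪p, k⟫ / ‖k‖ ^ 2), ?_⟩
  have hk2 : 0 < ‖k‖ ^ 2 := by positivity
  rw [← sq_lt_sq₀ (norm_nonneg _) (norm_nonneg _), norm_add_sq_real, inner_smul_right,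
    norm_smul, mul_pow, Real.norm_eq_abs, sq_abs]
  field_simp
  nlinarith [sq_pos_of_ne_zero h]

namespace AffineMap

variable {E F : Type*} [NormedAddCommGroup F] [NormedSpace ℝ F]

section Normed

variable [NormedAddCommGroup E] [NormedSpace ℝ E]

theorem apply_add_of_linear_eq_zero (f : E →ᵃ[ℝ] F) (p : E) {v : E} (hv : f.linear v = 0) :
    f (p + v) = f p := by
  rw [add_comm, ← vadd_eq_add, f.map_vadd, hv, zero_vadd]

theorem image_sphere_eq_image_closedBall (f : E →ᵃ[ℝ] F) (hf : LinearMap.ker f.linear ≠ ⊥)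
    (x : E) {r : ℝ} (hr : 0 ≤ r) : f '' sphere x r = f '' closedBall x r := by
  refine (image_mono sphere_subset_closedBall).antisymm ?_
  rintro _ ⟨p, hp, rfl⟩
  obtain ⟨k, hk, hk0⟩ := (Submodule.ne_bot_iff _).mp hf
  set M := 2 * r / ‖k‖
  have hM : ‖M • k‖ = 2 * r := by
    rw [norm_smul, Real.norm_of_nonneg (by positivity),
      div_mul_cancel₀ _ (norm_ne_zero_iff.mpr hk0)]
  set g : ℝ → ℝ := fun μ => dist (p + μ • k) x
  have hg0 : g 0 ≤ r := by simpa [g] using hp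
  have hgM : r ≤ g M := by
    have := norm_sub_norm_le (M • k) (x - p)
    rw [mem_closedBall, dist_eq_norm, ← norm_neg, neg_sub] at hp
    simp only [g, dist_eq_norm, hM] at this ⊢
    rw [show p + M • k - x = M • k - (x - p) by abel]
    linarith
  obtain ⟨μ, -, hμ⟩ :=
    intermediate_value_Icc (by positivity) (by fun_prop : Continuous g).continuousOn ⟨hg0, hgM⟩
  exact ⟨p + μ • k, hμ, f.apply_add_of_linear_eq_zero p
    (by rw [map_smul, LinearMap.mem_ker.mp hk, smul_zero])⟩

theorem image_closedBall_eq_closure_image_ball [FiniteDimensional ℝ E] (f : E →ᵃ[ℝ] F)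
    (x : E) {r : ℝ} (hr : r ≠ 0) : f '' closedBall x r = closure (f '' ball x r) := by
  have hf := f.continuous_of_finiteDimensional
  refine subset_antisymm ?_ ?_
  · rw [← closure_ball x hr]
    exact image_closure_subset_closure_image hf
  · exact closure_minimal (image_mono ball_subset_closedBall)
      ((isCompact_closedBall x r).image hf).isClosed

theorem interior_image_closedBall [FiniteDimensional ℝ E] [CompleteSpace F] (f : E →ᵃ[ℝ] F)
    (hf : Function.Surjective f) (x : E) {r : ℝ} (hr : 0 < r) :
    interior (f '' closedBall x r) = f '' ball x r := by
  have hopen : IsOpen (f '' ball x r) :=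
    f.isOpenMap f.continuous_of_finiteDimensional hf _ isOpen_ball
  rw [f.image_closedBall_eq_closure_image_ball x hr.ne',
    ((convex_ball x r).affine_image f).interior_closure_eq_interior_of_nonempty_interior
      (by rw [hopen.interior_eq]; exact (nonempty_ball.mpr hr).image f),
    hopen.interior_eq]

end Normed

theorem apply_mem_image_ball_of_inner_ne_zero [NormedAddCommGroup E] [InnerProductSpace ℝ E]
    (f : E →ᵃ[ℝ] F) {k : E} (hk : f.linear k = 0) {p : E} {r : ℝ}
    (hp : ‖p‖ ≤ r) (hpk : ⟪p, k⟫ ≠ 0) : f p ∈ f '' ball 0 r := by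
  obtain ⟨μ, hμ⟩ := exists_norm_add_smul_lt hpk
  exact ⟨p + μ • k, mem_ball_zero_iff.mpr (hμ.trans_le hp),
    f.apply_add_of_linear_eq_zero p (by rw [map_smul, hk, smul_zero])⟩

end AffineMap

noncomputable section

def conjShear (c : ℂ) : ℂ →ₗ[ℝ] ℂ where
  toFun ζ := ζ + c * conj ζ
  map_add' ζ η := by simp only [map_add]; ring
  map_smul' r ζ := by simp only [real_smul, map_mul, conj_ofReal, RingHom.id_apply]; ring

theorem conjShear_apply (c ζ : ℂ) : conjShear c ζ = ζ + c * conj ζ := rfl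

theorem conjShear_injective {c : ℂ} (hc : ‖c‖ ≠ 1) : Function.Injective (conjShear c) := by
  refine (injective_iff_map_eq_zero _).mpr fun ζ hζ => ?_
  have h : ‖ζ‖ = ‖c‖ * ‖ζ‖ := by
    rw [← norm_conj ζ, ← norm_mul, ← neg_eq_of_add_eq_zero_right hζ, norm_neg, norm_conj]
  by_contra hζ0
  exact hc (mul_eq_right₀ (norm_ne_zero_iff.mpr hζ0) |>.mp h.symm)

theorem conjShear_surjective {c : ℂ} (hc : ‖c‖ ≠ 1) : Function.Surjective (conjShear c) :=
  LinearMap.injective_iff_surjective.mp (conjShear_injective hc)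

def ellipseLinear (a b c : ℂ) (t : ℝ) : WithLp 2 (ℝ × ℂ) →ₗ[ℝ] ℂ where
  toFun p := (a - b) / 2 * p.fst + t / 2 * conjShear c p.snd
  map_add' p q := by simp only [WithLp.add_fst, WithLp.add_snd, map_add]; push_cast; ring
  map_smul' r p := by
    rw [WithLp.smul_fst, WithLp.smul_snd, map_smul]
    simp only [smul_eq_mul, real_smul, RingHom.id_apply]
    push_cast; ring

def ellipseMap (a b c : ℂ) (t : ℝ) : WithLp 2 (ℝ × ℂ) →ᵃ[ℝ] ℂ where
  toFun p := (a + b) / 2 + ellipseLinear a b c t p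
  linear := ellipseLinear a b c t
  map_vadd' p v := by simp only [vadd_eq_add, map_add]; ring

variable (a b c : ℂ)

theorem ellipseMap_apply (t : ℝ) (p : WithLp 2 (ℝ × ℂ)) :
    ellipseMap a b c t p =
      (a + b) / 2 + (a - b) / 2 * p.fst + t / 2 * (p.snd + c * conj p.snd) := by
  simp only [ellipseMap, ellipseLinear, conjShear, AffineMap.coe_mk, LinearMap.coe_mk,
    AddHom.coe_mk]
  ring

theorem ker_ellipseLinear_ne_bot (t : ℝ) : LinearMap.ker (ellipseLinear a b c t) ≠ ⊥ :=
  LinearMap.ker_ne_bot_of_finrank_lt <| by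
    rw [(WithLp.linearEquiv 2 ℝ (ℝ × ℂ)).finrank_eq, Module.finrank_prod,
      Complex.finrank_real_complex, Module.finrank_self]
    norm_num

theorem ellipseMap_surjective (hc : ‖c‖ ≠ 1) {t : ℝ} (ht : t ≠ 0) :
    Function.Surjective (ellipseMap a b c t) := by
  intro y
  obtain ⟨w, hw⟩ := conjShear_surjective hc (2 / t * (y - (a + b) / 2))
  refine ⟨toLp 2 (0, w), ?_⟩
  have ht' : (t : ℂ) ≠ 0 := ofReal_ne_zero.mpr ht
  rw [ellipseMap_apply, toLp_fst, toLp_snd, ← conjShear_apply, hw, ofReal_zero]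
  field_simp
  ring

def hopf (x : EuclideanSpace ℂ (Fin 2)) : WithLp 2 (ℝ × ℂ) :=
  toLp 2 (normSq (x 0) - normSq (x 1), 2 * (conj (x 0) * x 1))

theorem norm_hopf (x : EuclideanSpace ℂ (Fin 2)) : ‖hopf x‖ = ‖x‖ ^ 2 := by
  rw [← sq_eq_sq₀ (norm_nonneg _) (by positivity), prod_norm_sq_eq_of_L2,
    EuclideanSpace.norm_sq_eq, Fin.sum_univ_two]
  simp only [hopf, toLp_fst, toLp_snd, Real.norm_eq_abs, sq_abs, norm_mul, norm_conj,
    mul_pow, Complex.sq_norm, Complex.norm_two]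
  ring

theorem hopf_surjective : Function.Surjective hopf := by
  rintro ⟨τ, ζ⟩
  set ρ := ‖toLp 2 (τ, ζ)‖
  have hρ : ρ ^ 2 = τ ^ 2 + normSq ζ := by
    simp [ρ, prod_norm_sq_eq_of_L2, Complex.normSq_eq_norm_sq]
  have hρ0 : 0 ≤ ρ := norm_nonneg _
  rcases (show 0 ≤ ρ + τ by nlinarith [normSq_nonneg ζ]).eq_or_lt with h | h
  · have hζ : ζ = 0 := normSq_eq_zero.mp (by nlinarith [normSq_nonneg ζ])
    have hτ : τ = -ρ := by linarith
    refine ⟨toLp 2 ![0, (√ρ : ℂ)], ?_⟩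
    simp [hopf, hζ, hτ, normSq_ofReal, Real.mul_self_sqrt hρ0]
  · set u : ℂ := ((√((ρ + τ) / 2) : ℝ) : ℂ)
    have hu : normSq u = (ρ + τ) / 2 := by
      rw [normSq_ofReal, Real.mul_self_sqrt (by positivity)]
    have hu0 : u ≠ 0 := by
      intro h0; rw [h0, normSq_zero] at hu; linarith
    refine ⟨toLp 2 ![u, ζ / (2 * u)], ?_⟩
    simp only [hopf, Matrix.cons_val_zero, Matrix.cons_val_one, Matrix.cons_val_fin_one,
      normSq_div, normSq_mul, hu, show conj u = u from conj_ofReal _]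
    congr 2
    · rw [show normSq 2 = 4 by norm_num [normSq_apply]]
      field_simp
      nlinarith
    · field_simp

theorem inner_toEuclideanCLM_eq_ellipseMap_hopf (t : ℝ) {x : EuclideanSpace ℂ (Fin 2)}
    (hx : ‖x‖ = 1) :
    inner ℂ x (Matrix.toEuclideanCLM (𝕜 := ℂ) !![a, (t : ℂ); c * t, b] x) =
      ellipseMap a b c t (hopf x) := by
  have hx2 : (normSq (x 0) : ℂ) + normSq (x 1) = 1 := by
    have := EuclideanSpace.norm_sq_eq x
    rw [hx, one_pow, Fin.sum_univ_two, Complex.sq_norm, Complex.sq_norm] at this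
    exact_mod_cast this.symm
  rw [ellipseMap_apply, PiLp.inner_apply, Fin.sum_univ_two]
  simp only [hopf, toLp_fst, toLp_snd, RCLike.inner_apply, Matrix.ofLp_toEuclideanCLM,
    Matrix.mulVec, dotProduct, Fin.sum_univ_two, Matrix.of_apply, Matrix.cons_val',
    Matrix.cons_val_zero, Matrix.cons_val_one, Matrix.cons_val_fin_one, ofReal_sub, map_mul,
    map_ofNat, RingHomCompTriple.comp_apply, RingHom.id_apply]
  rw [normSq_eq_conj_mul_self, normSq_eq_conj_mul_self] at hx2 ⊢
  linear_combination (a + b) / 2 * hx2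

theorem numRange_eq_image_sphere (t : ℝ) :
    numRange !![a, (t : ℂ); c * t, b] = ellipseMap a b c t '' sphere 0 1 := by
  ext z
  constructor
  · rintro ⟨x, hx, rfl⟩
    exact ⟨hopf x, by simp [norm_hopf, hx],
      (inner_toEuclideanCLM_eq_ellipseMap_hopf a b c t hx).symm⟩
  · rintro ⟨p, hp, rfl⟩
    obtain ⟨x, rfl⟩ := hopf_surjective p
    have hx : ‖x‖ = 1 := by
      rw [mem_sphere_zero_iff_norm, norm_hopf] at hp
      exact (pow_left_inj₀ (norm_nonneg x) zero_le_one two_ne_zero).mp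
        (hp.trans (one_pow 2).symm)
    exact ⟨x, hx, (inner_toEuclideanCLM_eq_ellipseMap_hopf a b c t hx).symm⟩

theorem numRange_eq_image_closedBall (t : ℝ) :
    numRange !![a, (t : ℂ); c * t, b] = ellipseMap a b c t '' closedBall 0 1 := by
  rw [numRange_eq_image_sphere,
    (ellipseMap a b c t).image_sphere_eq_image_closedBall (ker_ellipseLinear_ne_bot a b c t) 0
      zero_le_one]

def poles : Set (WithLp 2 (ℝ × ℂ)) := sphere 0 1 ∩ {p | p.snd = 0}

def scaleSnd (s : ℝ) (p : WithLp 2 (ℝ × ℂ)) : WithLp 2 (ℝ × ℂ) :=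
  toLp 2 (p.fst, s * p.snd)

theorem norm_scaleSnd_sq (s : ℝ) (p : WithLp 2 (ℝ × ℂ)) :
    ‖scaleSnd s p‖ ^ 2 = p.fst ^ 2 + s ^ 2 * ‖p.snd‖ ^ 2 := by
  simp [scaleSnd, prod_norm_sq_eq_of_L2, mul_pow]

theorem norm_scaleSnd_lt {s : ℝ} (hs : |s| < 1) {p : WithLp 2 (ℝ × ℂ)} (hp : p.snd ≠ 0) :
    ‖scaleSnd s p‖ < ‖p‖ := by
  have h1 : s ^ 2 < 1 := by rwa [sq_lt_one_iff_abs_lt_one]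
  have h2 : 0 < ‖p.snd‖ ^ 2 := by positivity
  rw [← sq_lt_sq₀ (norm_nonneg _) (norm_nonneg _), norm_scaleSnd_sq, prod_norm_sq_eq_of_L2,
    Real.norm_eq_abs, sq_abs]
  nlinarith

theorem norm_scaleSnd_le {s : ℝ} (hs : 1 ≤ |s|) (p : WithLp 2 (ℝ × ℂ)) :
    ‖scaleSnd s p‖ ≤ |s| * ‖p‖ := by
  have h1 : 1 ≤ s ^ 2 := by rwa [one_le_sq_iff_one_le_abs]
  rw [← sq_le_sq₀ (norm_nonneg _) (by positivity), norm_scaleSnd_sq, mul_pow, sq_abs,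
    prod_norm_sq_eq_of_L2, Real.norm_eq_abs, sq_abs]
  nlinarith [sq_nonneg p.fst]

theorem scaleSnd_scaleSnd_inv {s : ℝ} (hs : s ≠ 0) (p : WithLp 2 (ℝ × ℂ)) :
    scaleSnd s (scaleSnd s⁻¹ p) = p := by
  change toLp 2 (p.fst, (s : ℂ) * ((s⁻¹ : ℝ) * p.snd)) = toLp 2 (p.fst, p.snd)
  rw [ofReal_inv, mul_inv_cancel_left₀ (ofReal_ne_zero.mpr hs)]

theorem scaleSnd_of_snd_eq_zero (s : ℝ) {p : WithLp 2 (ℝ × ℂ)} (hp : p.snd = 0) :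
    scaleSnd s p = p := by
  change toLp 2 (p.fst, s * p.snd) = toLp 2 (p.fst, p.snd)
  rw [hp, mul_zero]

theorem ellipseMap_mul_scaleSnd (s t : ℝ) (p : WithLp 2 (ℝ × ℂ)) :
    ellipseMap a b c (s * t) p = ellipseMap a b c t (scaleSnd s p) := by
  simp only [ellipseMap_apply, scaleSnd, toLp_fst, toLp_snd, map_mul, conj_ofReal]
  push_cast
  ring

theorem image_ball_subset_iUnion_numRange {d : ℝ} (hd : 0 < d) :
    ellipseMap a b c d '' ball 0 1 ⊆ ⋃ t ∈ Ioo 0 d, numRange !![a, (t : ℂ); c * t, b] := by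
  rintro _ ⟨q, hq, rfl⟩
  rw [mem_ball_zero_iff] at hq
  set s := (1 + ‖q‖) / 2 with hs_def
  have hs : 0 < s := by positivity
  have hs1 : s < 1 := by linarith
  have hqs : ‖q‖ ≤ s := by linarith
  refine mem_biUnion (x := s * d) ⟨by positivity, mul_lt_of_lt_one_left hd hs1⟩ ?_
  rw [numRange_eq_image_closedBall]
  refine ⟨scaleSnd s⁻¹ q, ?_, by rw [ellipseMap_mul_scaleSnd, scaleSnd_scaleSnd_inv hs.ne']⟩
  have hs' : 1 ≤ |s⁻¹| := by
    rw [abs_inv, abs_of_pos hs]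
    exact one_le_inv₀ hs |>.mpr hs1.le
  rw [mem_closedBall_zero_iff]
  calc ‖scaleSnd s⁻¹ q‖ ≤ |s⁻¹| * ‖q‖ := norm_scaleSnd_le hs' q
    _ = ‖q‖ / s := by rw [abs_inv, abs_of_pos hs, inv_mul_eq_div]
    _ ≤ 1 := (div_le_one hs).mpr hqs

theorem iUnion_numRange_subset {d : ℝ} (hd : 0 < d) :
    ⋃ t ∈ Ioo 0 d, numRange !![a, (t : ℂ); c * t, b] ⊆
      ellipseMap a b c d '' (ball 0 1 ∪ poles) := by
  simp only [iUnion_subset_iff]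
  intro t ht
  rw [numRange_eq_image_sphere]
  rintro _ ⟨p, hp, rfl⟩
  refine ⟨scaleSnd (t / d) p, ?_,
    by rw [← ellipseMap_mul_scaleSnd, div_mul_cancel₀ _ hd.ne']⟩
  by_cases hp0 : p.snd = 0
  · rw [scaleSnd_of_snd_eq_zero _ hp0]
    exact Or.inr ⟨hp, hp0⟩
  · left
    rw [mem_ball_zero_iff, ← mem_sphere_zero_iff_norm.mp hp]
    refine norm_scaleSnd_lt ?_ hp0
    rw [abs_of_pos (div_pos ht.1 hd)]
    exact (div_lt_one hd).mpr ht.2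

theorem ellipseMap_toLp_one_zero (t : ℝ) : ellipseMap a b c t (toLp 2 (1, 0)) = a := by
  rw [ellipseMap_apply, toLp_fst, toLp_snd, map_zero]
  push_cast
  ring

theorem ellipseMap_toLp_neg_one_zero (t : ℝ) : ellipseMap a b c t (toLp 2 (-1, 0)) = b := by
  rw [ellipseMap_apply, toLp_fst, toLp_snd, map_zero]
  push_cast
  ring

theorem ellipseMap_mem_image_ball (hc : ‖c‖ ≠ 1) {d : ℝ} (hd : d ≠ 0)
    {p : WithLp 2 (ℝ × ℂ)} (hp : p ∈ poles) :
    ellipseMap a b c d p ∈ ellipseMap a b c d '' ball 0 1 := by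
  obtain ⟨hp, hp0 : p.snd = 0⟩ := hp
  obtain ⟨w, hw⟩ := conjShear_surjective hc (-(a - b) / d)
  refine (ellipseMap a b c d).apply_mem_image_ball_of_inner_ne_zero (k := toLp 2 (1, w)) ?_
    (mem_sphere_zero_iff_norm.mp hp).le ?_
  · change ellipseLinear a b c d _ = 0
    have hd' : (d : ℂ) ≠ 0 := ofReal_ne_zero.mpr hd
    simp only [ellipseLinear, LinearMap.coe_mk, AddHom.coe_mk, toLp_fst, toLp_snd, hw,
      ofReal_one]
    field_simp
    ring
  · have hnorm := prod_norm_sq_eq_of_L2 p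
    rw [mem_sphere_zero_iff_norm.mp hp, hp0] at hnorm
    simp only [prod_inner_apply, ofLp_fst, RCLike.inner_apply, Real.ringHom_apply, one_mul,
      ofLp_snd, hp0, inner_zero_left, add_zero, ne_eq]
    rintro h0
    simp [h0] at hnorm

theorem toLp_mem_poles {τ : ℝ} (hτ : |τ| = 1) : toLp 2 (τ, (0 : ℂ)) ∈ poles :=
  ⟨by rw [mem_sphere_zero_iff_norm, norm_toLp_fst, Real.norm_eq_abs, hτ], rfl⟩

end

theorem stmt_18 (a b c : ℂ) (d : ℝ) (hd : 0 < d)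
    (S : ℝ → Matrix (Fin 2) (Fin 2) ℂ)
    (hS : ∀ t : ℝ, S t = !![a, (t : ℂ); c * t, b])
    (E : Set ℂ) (hE : E = ⋃ t ∈ Set.Ioo (0 : ℝ) d, numRange (S t)) :
    closure E = numRange (S d) ∧
    (‖c‖ ≠ 1 →
      E = interior (numRange (S d)) ∧
      a ∈ interior (numRange (S d)) ∧ b ∈ interior (numRange (S d))) := by
  simp only [hS] at hE ⊢
  set φ := ellipseMap a b c d
  have hball : φ '' ball 0 1 ⊆ E := hE ▸ image_ball_subset_iUnion_numRange a b c hd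
  have hsub : E ⊆ φ '' (ball 0 1 ∪ poles) := hE ▸ iUnion_numRange_subset a b c hd
  have hK : φ '' closedBall 0 1 = closure (φ '' ball 0 1) :=
    φ.image_closedBall_eq_closure_image_ball 0 one_ne_zero
  rw [numRange_eq_image_closedBall]
  refine ⟨?_, fun hc => ?_⟩
  · refine (closure_minimal (hsub.trans (image_mono ?_)) (hK ▸ isClosed_closure)).antisymm
      (hK ▸ closure_mono hball)
    exact union_subset ball_subset_closedBall (inter_subset_left.trans sphere_subset_closedBall)
  rw [φ.interior_image_closedBall (ellipseMap_surjective a b c hc hd.ne') 0 one_pos]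
  have hpoles : ∀ p ∈ poles, φ p ∈ φ '' ball 0 1 :=
    fun p hp => ellipseMap_mem_image_ball a b c hc hd.ne' hp
  refine ⟨hball.antisymm' (hsub.trans ?_), ?_, ?_⟩
  · rw [image_union]
    exact union_subset subset_rfl (image_subset_iff.mpr hpoles)
  · simpa only [φ, ellipseMap_toLp_one_zero] using hpoles _ (toLp_mem_poles abs_one)
  · simpa only [φ, ellipseMap_toLp_neg_one_zero] using
      hpoles _ (toLp_mem_poles (τ := -1) (by norm_num))
end
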